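/- arXiv:math/9811124 — 5 statements merged into one kernel-verified Lean document; each statement's English description precedes it below -/
import Mathlib

section
/- For every constant c ∈ (0, ∞) there exist an integer n ≥ 1, independent symmetric real random variables X_1, …, X_n regularly covering a random variable X̃_1, independent identically distributed copies X̃_1, …, X̃_n of X̃_1, and a real λ ≥ 0 such that P(|X̃_1 + ⋯ + X̃_n| ≥ λ) > c · P(|X_1 + ⋯ + X_n| ≥ λ/c). Concretely, for any n > max(1, c) one may take X_2 ≡ ⋯ ≡ X_n ≡ 0, X_1 with P(X_1 = 1) = P(X_1 = −1) = 1/2, and λ = n: then |X_1 + ⋯ + X_n| ≡ 1 so P(|X_1 + ⋯ + X_n| ≥ n/c) = 0, while P(|X̃_1 + ⋯ + X̃_n| ≥ n) ≥ 2^{−n(n+1)} > 0. -/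
open MeasureTheory ProbabilityTheory Function Set
open scoped ENNReal NNReal

lemma aux_eval_preimage {ι : Type*} [Fintype ι] [DecidableEq ι] (i : ι) (s : Set ℝ) :
    (fun ω : ι → ℝ => ω i) ⁻¹' s = Set.pi Set.univ (fun j => if j = i then s else Set.univ) := by
  ext ω
  simp only [Set.mem_preimage, Set.mem_pi, Set.mem_univ, forall_true_left]
  constructor
  · intro h j
    by_cases hj : j = i <;> simp [hj, h]
  · intro h
    have := h i
    simpa using this

lemma aux_pi_eval_apply {ι : Type*} [Fintype ι] [DecidableEq ι] (m : ι → Measure ℝ)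
    [∀ i, IsProbabilityMeasure (m i)] (i : ι) (s : Set ℝ) :
    Measure.pi m ((fun ω : ι → ℝ => ω i) ⁻¹' s) = m i s := by
  rw [aux_eval_preimage, Measure.pi_pi]
  have : ∀ j, m j (if j = i then s else Set.univ) = if j = i then m j s else 1 := by
    intro j; split <;> simp
  simp_rw [this]
  rw [Finset.prod_ite_eq' Finset.univ i (fun j => m j s)]
  simp

lemma aux_pi_map_eval {ι : Type*} [Fintype ι] [DecidableEq ι] (m : ι → Measure ℝ)
    [∀ i, IsProbabilityMeasure (m i)] (i : ι) :
    Measure.map (fun ω : ι → ℝ => ω i) (Measure.pi m) = m i := by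
  ext s hs
  rw [Measure.map_apply (measurable_pi_apply i) hs, aux_pi_eval_apply m i s]

lemma aux_pi_indep {ι κ : Type*} [Fintype ι] [DecidableEq ι] (m : ι → Measure ℝ)
    [∀ i, IsProbabilityMeasure (m i)] (e : κ → ι) (he : Function.Injective e) :
    iIndepFun
      (fun k (ω : ι → ℝ) => ω (e k)) (Measure.pi m) := by
  classical
  rw [iIndepFun_iff_measure_inter_preimage_eq_mul]
  intro S sets hsets
  set u : ι → Set ℝ := fun i => ⋂ k ∈ S.filter (fun k => e k = i), sets k with hu_def
  have hset : (⋂ k ∈ S, (fun ω : ι → ℝ => ω (e k)) ⁻¹' sets k) = Set.pi Set.univ u := by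
    ext ω
    simp only [Set.mem_iInter, Set.mem_preimage, Set.mem_pi, Set.mem_univ, forall_true_left,
      hu_def, Finset.mem_filter]
    constructor
    · rintro h i k ⟨hk, rfl⟩
      exact h k hk
    · intro h k hk
      exact h (e k) k ⟨hk, rfl⟩
  have hueq : ∀ k ∈ S, u (e k) = sets k := by
    intro k hk
    have hfilter : S.filter (fun k' => e k' = e k) = {k} := by
      ext k'
      simp only [Finset.mem_filter, Finset.mem_singleton]
      constructor
      · rintro ⟨_, h⟩; exact he h
      · rintro rfl; exact ⟨hk, rfl⟩
    rw [hu_def]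
    simp [hfilter]
  have huuniv : ∀ i, i ∉ S.image e → u i = Set.univ := by
    intro i hi
    have : S.filter (fun k => e k = i) = ∅ := by
      ext k
      simp only [Finset.mem_filter, Finset.notMem_empty, iff_false, not_and]
      intro hk hek
      exact hi (Finset.mem_image.mpr ⟨k, hk, hek⟩)
    rw [hu_def]
    simp [this]
  rw [hset, Measure.pi_pi]
  calc ∏ i, m i (u i) = ∏ i ∈ S.image e, m i (u i) := by
        refine (Finset.prod_subset (Finset.subset_univ _) (fun i _ hi => ?_)).symm
        rw [huuniv i hi]; simp
    _ = ∏ k ∈ S, m (e k) (u (e k)) :=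
        Finset.prod_image (fun a _ b _ h => he h)
    _ = ∏ k ∈ S, Measure.pi m ((fun ω : ι → ℝ => ω (e k)) ⁻¹' sets k) := by
        refine Finset.prod_congr rfl (fun k hk => ?_)
        rw [hueq k hk, aux_pi_eval_apply m (e k) (sets k)]

/-- Independent random variables `X_1, …, X_n` *regularly cover* a random variable `Y`
when the distribution of `Y` is the arithmetic mean of the distributions of the `X_k`. -/
def RegularlyCovers {Ω E : Type*} [MeasurableSpace Ω] [MeasurableSpace E]
    (μ : Measure Ω) {n : ℕ} (X : Fin n → Ω → E) (Y : Ω → E) : Prop :=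
  Measure.map Y μ = (n : ℝ≥0∞)⁻¹ • ∑ k : Fin n, Measure.map (X k) μ

/-- For every `c ∈ (0,∞)` there are `n`, independent symmetric real random variables
`X_1, …, X_n` regularly covering `X̃_1`, i.i.d. copies `X̃_1, …, X̃_n` of `X̃_1`, and
`λ ≥ 0` with `P(|X̃_1 + ⋯ + X̃_n| ≥ λ) > c · P(|X_1 + ⋯ + X_n| ≥ λ/c)`; i.e. the converse
of the main comparison inequality fails. -/
theorem stmt_1 (c : ℝ) (hc : 0 < c) :
    ∃ (Ω : Type) (_ : MeasurableSpace Ω) (μ : Measure Ω) (_ : IsProbabilityMeasure μ)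
      (n : ℕ) (hn : 0 < n) (X Xt : Fin n → Ω → ℝ) (lam : ℝ),
      (∀ k, Measurable (X k)) ∧ (∀ k, Measurable (Xt k)) ∧
      iIndepFun X μ ∧
      (∀ k, IdentDistrib (X k) (fun ω => -(X k ω)) μ μ) ∧
      RegularlyCovers μ X (Xt ⟨0, hn⟩) ∧
      iIndepFun Xt μ ∧
      (∀ k, IdentDistrib (Xt k) (Xt ⟨0, hn⟩) μ μ) ∧
      0 ≤ lam ∧
      ENNReal.ofReal c * μ {ω | lam / c ≤ |∑ k, X k ω|} <
        μ {ω | lam ≤ |∑ k, Xt k ω|} := by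
  classical
  set n : ℕ := ⌈c⌉₊ + 1 with hn_def
  have hn : 0 < n := Nat.succ_pos _
  have hcn : c < (n : ℝ) := by
    refine lt_of_le_of_lt (Nat.le_ceil c) ?_
    exact_mod_cast Nat.lt_succ_self _
  set ρ : Measure ℝ := (2⁻¹ : ℝ≥0∞) • Measure.dirac (1 : ℝ)
      + (2⁻¹ : ℝ≥0∞) • Measure.dirac (-1 : ℝ) with hρ_def
  have hρ_univ : ρ Set.univ = 1 := by
    simp [hρ_def, ENNReal.inv_two_add_inv_two]
  haveI hρ_prob : IsProbabilityMeasure ρ := ⟨hρ_univ⟩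
  set ν : Measure ℝ := ((n : ℝ≥0∞))⁻¹ • (ρ + ((n - 1 : ℕ) : ℝ≥0∞) • Measure.dirac (0 : ℝ))
    with hν_def
  have hadd : (1 + ((n - 1 : ℕ) : ℝ≥0∞)) = (n : ℝ≥0∞) := by
    rw [← Nat.cast_one, ← Nat.cast_add]
    congr 1
    omega
  have hν_univ : ν Set.univ = 1 := by
    rw [hν_def]
    simp only [Measure.smul_apply, Measure.add_apply, hρ_univ, Measure.dirac_apply_of_mem
      (Set.mem_univ _), smul_eq_mul, mul_one]
    rw [hadd]
    exact ENNReal.inv_mul_cancel (by exact_mod_cast hn.ne') (ENNReal.natCast_ne_top n)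
  haveI hν_prob : IsProbabilityMeasure ν := ⟨hν_univ⟩
  set m : Fin (n + 1) → Measure ℝ := fun i => if i = 0 then ρ else ν with hm_def
  haveI hm_prob : ∀ i, IsProbabilityMeasure (m i) := by
    intro i
    rw [hm_def]
    dsimp only
    by_cases hi : i = 0
    · rw [if_pos hi]; infer_instance
    · rw [if_neg hi]; infer_instance
  set μ : Measure (Fin (n + 1) → ℝ) := Measure.pi m with hμ_def
  have hXmeas : ∀ k : Fin n, Measurable
      (fun ω : Fin (n + 1) → ℝ => if k = 0 then ω (Fin.castSucc k) else 0) := by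
    intro k
    by_cases hk : k = 0
    · simp only [hk, if_true]
      exact measurable_pi_apply _
    · simp only [if_neg hk]
      exact measurable_const
  have hX0map : Measure.map (fun ω : Fin (n + 1) → ℝ => ω (Fin.castSucc (0 : Fin n))) μ
      = ρ := by
    rw [hμ_def, aux_pi_map_eval m (Fin.castSucc (0 : Fin n))]
    rw [hm_def]
    simp
  have hmapX : ∀ k : Fin n, Measure.map
      (fun ω : Fin (n + 1) → ℝ => if k = 0 then ω (Fin.castSucc k) else 0) μ
      = if k = 0 then ρ else Measure.dirac (0 : ℝ) := by
    intro k
    by_cases hk : k = 0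
    · subst hk
      rw [if_pos rfl]
      rw [show (fun ω : Fin (n + 1) → ℝ => if (0 : Fin n) = 0 then ω (Fin.castSucc (0 : Fin n))
          else 0) = fun ω : Fin (n + 1) → ℝ => ω (Fin.castSucc (0 : Fin n)) from by
        funext ω; rw [if_pos rfl]]
      exact hX0map
    · rw [if_neg hk]
      rw [show (fun ω : Fin (n + 1) → ℝ => if k = 0 then ω (Fin.castSucc k) else 0)
          = fun _ : Fin (n + 1) → ℝ => (0 : ℝ) from by funext ω; rw [if_neg hk]]
      rw [Measure.map_const]
      simp
  have hmapXt : ∀ k : Fin n,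
      Measure.map (fun ω : Fin (n + 1) → ℝ => ω (Fin.succ k)) μ = ν := by
    intro k
    rw [hμ_def, aux_pi_map_eval m (Fin.succ k), hm_def]
    simp [Fin.succ_ne_zero]
  refine ⟨(Fin (n + 1) → ℝ), inferInstance, μ, by rw [hμ_def]; infer_instance, n, hn,
    fun k ω => if k = 0 then ω (Fin.castSucc k) else 0,
    fun k ω => ω (Fin.succ k), (n : ℝ),
    hXmeas, fun k => measurable_pi_apply _, ?_, ?_, ?_, ?_, ?_, Nat.cast_nonneg n, ?_⟩
  · -- independence of X
    have hI := aux_pi_indep m Fin.castSucc (Fin.castSucc_injective n)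
    have hI2 := hI.comp (fun k x => if k = 0 then x else 0)
      (fun k => by
        by_cases hk : k = 0
        · simp only [hk, if_true]; exact measurable_id
        · simp only [if_neg hk]; exact measurable_const)
    rw [hμ_def]
    exact hI2
  · -- symmetry
    intro k
    by_cases hk : k = 0
    · subst hk
      refine ⟨(hXmeas 0).aemeasurable, ((hXmeas 0).neg).aemeasurable, ?_⟩
      dsimp only
      rw [show (fun ω : Fin (n + 1) → ℝ => if (0 : Fin n) = 0 then ω (Fin.castSucc (0 : Fin n))
          else 0) = fun ω : Fin (n + 1) → ℝ => ω (Fin.castSucc (0 : Fin n)) from by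
        funext ω; rw [if_pos rfl]]
      rw [show (fun ω : Fin (n + 1) → ℝ =>
          -(if (0 : Fin n) = 0 then ω (Fin.castSucc (0 : Fin n)) else 0))
          = Neg.neg ∘ (fun ω : Fin (n + 1) → ℝ => ω (Fin.castSucc (0 : Fin n)))
          from by funext ω; simp [Function.comp]]
      have hρ_neg : Measure.map (Neg.neg : ℝ → ℝ) ρ = ρ := by
        rw [hρ_def, Measure.map_add _ _ measurable_neg, Measure.map_smul, Measure.map_smul,
          Measure.map_dirac' measurable_neg, Measure.map_dirac' measurable_neg]
        simp [add_comm]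
      calc Measure.map (fun ω : Fin (n + 1) → ℝ => ω (Fin.castSucc (0 : Fin n))) μ
          = ρ := hX0map
        _ = Measure.map (Neg.neg : ℝ → ℝ) ρ := hρ_neg.symm
        _ = Measure.map (Neg.neg : ℝ → ℝ)
            (Measure.map (fun ω : Fin (n + 1) → ℝ => ω (Fin.castSucc (0 : Fin n))) μ) := by
            rw [hX0map]
        _ = Measure.map ((Neg.neg : ℝ → ℝ) ∘ fun ω : Fin (n + 1) → ℝ =>
              ω (Fin.castSucc (0 : Fin n))) μ :=
            Measure.map_map measurable_neg (measurable_pi_apply _)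
    · simp only [if_neg hk, neg_zero]
      exact IdentDistrib.refl aemeasurable_const
  · -- RegularlyCovers
    unfold RegularlyCovers
    rw [hmapXt]
    have hsum : (∑ k : Fin n, Measure.map
        (fun ω : Fin (n + 1) → ℝ => if k = 0 then ω (Fin.castSucc k) else 0) μ)
        = ρ + ((n - 1 : ℕ) : ℝ≥0∞) • Measure.dirac (0 : ℝ) := by
      rw [Finset.sum_congr rfl (fun k _ => hmapX k)]
      rw [← Finset.add_sum_erase _ _ (Finset.mem_univ (0 : Fin n))]
      rw [if_pos rfl]
      congr 1
      rw [Finset.sum_congr rfl (fun k hk => if_neg (Finset.ne_of_mem_erase hk))]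
      rw [Finset.sum_const, Finset.card_erase_of_mem (Finset.mem_univ _), Finset.card_univ,
        Fintype.card_fin]
      rw [Nat.cast_smul_eq_nsmul]
    rw [hsum, hν_def]
  · -- independence of Xt
    have hI := aux_pi_indep m Fin.succ (Fin.succ_injective n)
    rw [hμ_def]
    exact hI
  · -- identically distributed
    intro k
    exact ⟨(measurable_pi_apply _).aemeasurable, (measurable_pi_apply _).aemeasurable,
      by rw [hmapXt, hmapXt]⟩
  · -- the inequality
    have hS : MeasurableSet {x : ℝ | (n : ℝ) / c ≤ |x|} :=
      measurableSet_le measurable_const measurable_abs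
    have hone : (1 : ℝ) < (n : ℝ) / c := (one_lt_div hc).mpr hcn
    have hsumX : ∀ ω : Fin (n + 1) → ℝ,
        (∑ k : Fin n, if k = 0 then ω (Fin.castSucc k) else 0) = ω 0 := by
      intro ω
      rw [Finset.sum_ite_eq' Finset.univ (0 : Fin n) (fun k => ω (Fin.castSucc k))]
      simp
    have hL : μ {ω | (n : ℝ) / c ≤ |∑ k : Fin n, if k = 0 then ω (Fin.castSucc k) else 0|}
        = 0 := by
      have hset : {ω : Fin (n + 1) → ℝ |
          (n : ℝ) / c ≤ |∑ k : Fin n, if k = 0 then ω (Fin.castSucc k) else 0|}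
          = (fun ω : Fin (n + 1) → ℝ => ω 0) ⁻¹' {x : ℝ | (n : ℝ) / c ≤ |x|} := by
        ext ω
        simp [hsumX ω]
      rw [hset, hμ_def, aux_pi_eval_apply m 0]
      have hm0 : m 0 = ρ := by rw [hm_def]; dsimp only; rw [if_pos rfl]
      rw [hm0, hρ_def]
      have h1 : (1 : ℝ) ∉ {x : ℝ | (n : ℝ) / c ≤ |x|} := by
        simp only [Set.mem_setOf_eq, abs_one, not_le]
        exact hone
      have h2 : (-1 : ℝ) ∉ {x : ℝ | (n : ℝ) / c ≤ |x|} := by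
        simp only [Set.mem_setOf_eq, abs_neg, abs_one, not_le]
        exact hone
      rw [Measure.add_apply, Measure.smul_apply, Measure.smul_apply,
        Measure.dirac_apply' _ hS, Measure.dirac_apply' _ hS,
        Set.indicator_of_notMem h1, Set.indicator_of_notMem h2]
      simp
    have hν1 : ν {(1 : ℝ)} ≠ 0 := by
      rw [hν_def]
      rw [Measure.smul_apply, Measure.add_apply, Measure.smul_apply, hρ_def,
        Measure.add_apply, Measure.smul_apply, Measure.smul_apply,
        Measure.dirac_apply_of_mem (Set.mem_singleton _),
        Measure.dirac_apply' _ (measurableSet_singleton _),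
        Measure.dirac_apply' _ (measurableSet_singleton _)]
      rw [Set.indicator_of_notMem (by norm_num : (-1 : ℝ) ∉ ({1} : Set ℝ)),
        Set.indicator_of_notMem (by norm_num : (0 : ℝ) ∉ ({1} : Set ℝ))]
      simp only [smul_eq_mul, mul_one, mul_zero, add_zero]
      refine mul_ne_zero (ENNReal.inv_ne_zero.mpr (ENNReal.natCast_ne_top n)) ?_
      simp [ENNReal.inv_ne_zero]
    have hA : μ (Set.pi Set.univ
        (fun i : Fin (n + 1) => if i = 0 then Set.univ else ({1} : Set ℝ))) ≠ 0 := by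
      rw [hμ_def, Measure.pi_pi, Finset.prod_ne_zero_iff]
      intro i _
      by_cases hi : i = 0
      · rw [hm_def]; dsimp only; simp [hi]
      · rw [hm_def]; dsimp only; rw [if_neg hi]
        simp only [hi, if_neg, ite_false]
        exact hν1
    have hsub : Set.pi Set.univ
        (fun i : Fin (n + 1) => if i = 0 then Set.univ else ({1} : Set ℝ))
        ⊆ {ω : Fin (n + 1) → ℝ | (n : ℝ) ≤ |∑ k : Fin n, ω (Fin.succ k)|} := by
      intro ω hω
      have hω1 : ∀ k : Fin n, ω (Fin.succ k) = 1 := by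
        intro k
        have := hω (Fin.succ k) (Set.mem_univ _)
        simpa [Fin.succ_ne_zero] using this
      have : (∑ k : Fin n, ω (Fin.succ k)) = (n : ℝ) := by
        rw [Finset.sum_congr rfl (fun k _ => hω1 k)]
        simp
      simp only [Set.mem_setOf_eq, this, abs_of_nonneg (Nat.cast_nonneg n : (0:ℝ) ≤ n)]
      exact le_rfl
    have hR : 0 < μ {ω : Fin (n + 1) → ℝ | (n : ℝ) ≤ |∑ k : Fin n, ω (Fin.succ k)|} :=
      lt_of_lt_of_le (pos_iff_ne_zero.mpr hA) (measure_mono hsub)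
    rw [hL, mul_zero]
    exact hR
end

section
/- There exists an absolute constant c ∈ (0, ∞) with the following property. Let X_1, …, X_n be independent identically distributed Banach-valued random variables with ‖X_i‖ < L almost surely for all i, and let S_n = X_1 + ⋯ + X_n. Then (E[‖S_n‖])² ≥ c · (E[‖S_n‖²] − c^{−1} L²). -/
open MeasureTheory ProbabilityTheory Finset
open scoped ENNReal NNReal

noncomputable section HJAux

set_option linter.unusedSectionVars false
set_option linter.unusedVariables false

variable {E : Type} [NormedAddCommGroup E] [NormedSpace ℝ E] [CompleteSpace E]
  [MeasurableSpace E] [BorelSpace E] [SecondCountableTopology E]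

variable {n : ℕ}

/-- partial sum of the first `k` coordinates -/
def hjS (k : ℕ) (y : Fin n → E) : E :=
  ∑ i ∈ Finset.univ.filter (fun i : Fin n => (i : ℕ) < k), y i

/-- sum of the coordinates from `k` on -/
def hjR (k : ℕ) (y : Fin n → E) : E :=
  ∑ i ∈ Finset.univ.filter (fun i : Fin n => ¬ (i : ℕ) < k), y i

lemma hjS_add_hjR (k : ℕ) (y : Fin n → E) : hjS k y + hjR k y = ∑ i, y i :=
  Finset.sum_filter_add_sum_filter_not _ _ _

lemma measurable_hjS (k : ℕ) : Measurable (hjS k : (Fin n → E) → E) :=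
  Finset.measurable_sum _ fun i _ => measurable_pi_apply i

lemma measurable_hjR (k : ℕ) : Measurable (hjR k : (Fin n → E) → E) :=
  Finset.measurable_sum _ fun i _ => measurable_pi_apply i

lemma hjS_succ (k : ℕ) (hk : k < n) (y : Fin n → E) :
    hjS (k + 1) y = hjS k y + y ⟨k, hk⟩ := by
  have h : Finset.univ.filter (fun i : Fin n => (i : ℕ) < k + 1)
      = insert (⟨k, hk⟩ : Fin n) (Finset.univ.filter (fun i : Fin n => (i : ℕ) < k)) := by
    ext i
    simp only [Finset.mem_filter, Finset.mem_univ, true_and, Finset.mem_insert]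
    constructor
    · intro hi
      rcases Nat.lt_succ_iff_lt_or_eq.1 hi with h' | h'
      · exact Or.inr h'
      · exact Or.inl (Fin.ext h')
    · rintro (rfl | hi)
      · exact Nat.lt_succ_self _
      · exact Nat.lt_succ_of_lt hi
  have hnot : (⟨k, hk⟩ : Fin n) ∉ Finset.univ.filter (fun i : Fin n => (i : ℕ) < k) := by
    simp
  rw [hjS, h, Finset.sum_insert hnot, hjS, add_comm]

lemma hjS_total (y : Fin n → E) : hjS n y = ∑ i, y i := by
  rw [hjS, Finset.filter_true_of_mem]
  intro i _
  exact i.2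

/-- norm bound for sums over a finset -/
lemma hj_norm_sum_le {ι : Type} {L : ℝ} (hL : 0 ≤ L) (s : Finset ι) (u : ι → E)
    (hu : ∀ i, ‖u i‖ ≤ L) : ‖∑ i ∈ s, u i‖ ≤ (s.card : ℝ) * L := by
  calc ‖∑ i ∈ s, u i‖ ≤ ∑ i ∈ s, ‖u i‖ := norm_sum_le _ _
    _ ≤ ∑ _i ∈ s, L := Finset.sum_le_sum fun i _ => hu i
    _ = (s.card : ℝ) * L := by rw [Finset.sum_const, nsmul_eq_mul]

lemma hj_integrable {α β : Type*} [MeasurableSpace α] [NormedAddCommGroup β] {μ : Measure α}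
    [IsFiniteMeasure μ] {f : α → β} {C : ℝ} (hm : AEStronglyMeasurable f μ)
    (h : ∀ᵐ x ∂μ, ‖f x‖ ≤ C) : Integrable f μ :=
  (integrable_const C).mono' hm h

lemma hj_sq_integral {α : Type*} [MeasurableSpace α] {μ : Measure α} [IsProbabilityMeasure μ]
    {g : α → ℝ} (h1 : Integrable g μ) (h2 : Integrable (fun x => g x ^ 2) μ) :
    (∫ x, g x ∂μ) ^ 2 ≤ ∫ x, g x ^ 2 ∂μ := by
  set I := ∫ x, g x ∂μ with hI
  have h0 : 0 ≤ ∫ x, (g x - I) ^ 2 ∂μ := integral_nonneg fun x => sq_nonneg _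
  have hexp : ∫ x, (g x - I) ^ 2 ∂μ = (∫ x, g x ^ 2 ∂μ) - I ^ 2 := by
    have : (fun x => (g x - I) ^ 2) = fun x => g x ^ 2 - (2 * I) * g x + I ^ 2 := by
      funext x; ring
    have hint1 : Integrable (fun x => g x ^ 2 - 2 * I * g x) μ := by
      exact h2.sub (h1.const_mul (2 * I))
    rw [this, integral_add hint1 (integrable_const _),
      integral_sub h2 (h1.const_mul _), integral_const_mul, integral_const]
    simp [measure_univ]
    ring
  linarith

lemma hj_ae_coord {ι : Type} [Fintype ι] {ν : Measure E} [IsProbabilityMeasure ν]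
    {p : E → Prop} (h : ∀ᵐ x ∂ν, p x) :
    ∀ᵐ y ∂(Measure.pi fun _ : ι => ν), ∀ i, p (y i) := by
  rw [ae_all_iff]
  intro i
  exact (Measure.tendsto_eval_ae_ae (i := i)).eventually h

lemma hj_map_eval {ι : Type} [Fintype ι] (ν : Measure E) [IsProbabilityMeasure ν] (i : ι) :
    Measure.map (Function.eval i) (Measure.pi fun _ : ι => ν) = ν := by
  classical
  ext s hs
  rw [Measure.map_apply (measurable_pi_apply i) hs, Set.eval_preimage, Measure.pi_pi]
  rw [Finset.prod_eq_single i]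
  · simp
  · intro j _ hj
    simp [Function.update_of_ne hj]
  · simp

lemma hj_integral_eval {ι : Type} [Fintype ι] (ν : Measure E) [IsProbabilityMeasure ν] (i : ι) :
    ∫ y, y i ∂(Measure.pi fun _ : ι => ν) = ∫ x, x ∂ν := by
  have h : Measure.map (Function.eval i) (Measure.pi fun _ : ι => ν) = ν := hj_map_eval ν i
  have h2 := integral_map (μ := Measure.pi fun _ : ι => ν) (φ := Function.eval i)
    (measurable_pi_apply i).aemeasurable (f := id) aestronglyMeasurable_id
  rw [h] at h2
  simpa [Function.eval] using h2.symm


section Block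

abbrev LoI (n k : ℕ) : Type := {i : Fin n // (i : ℕ) < k}
abbrev HiI (n k : ℕ) : Type := {i : Fin n // ¬ (i : ℕ) < k}

def hjlo (k : ℕ) (y : Fin n → E) : LoI n k → E := fun i => y i.1
def hjhi (k : ℕ) (y : Fin n → E) : HiI n k → E := fun i => y i.1
def hjloS (k : ℕ) (u : LoI n k → E) : E := ∑ i, u i
def hjhiS (k : ℕ) (v : HiI n k → E) : E := ∑ i, v i

lemma hjS_eq (k : ℕ) (y : Fin n → E) : hjS k y = hjloS k (hjlo k y) :=
  Finset.sum_subtype _ (by simp) y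

lemma hjR_eq (k : ℕ) (y : Fin n → E) : hjR k y = hjhiS k (hjhi k y) :=
  Finset.sum_subtype _ (by simp) y

lemma measurable_hjlo (k : ℕ) : Measurable (hjlo k : (Fin n → E) → LoI n k → E) :=
  measurable_pi_lambda _ fun i => measurable_pi_apply _

lemma measurable_hjhi (k : ℕ) : Measurable (hjhi k : (Fin n → E) → HiI n k → E) :=
  measurable_pi_lambda _ fun i => measurable_pi_apply _

lemma measurable_hjloS (k : ℕ) : Measurable (hjloS k : (LoI n k → E) → E) :=
  Finset.measurable_sum _ fun i _ => measurable_pi_apply _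

lemma measurable_hjhiS (k : ℕ) : Measurable (hjhiS k : (HiI n k → E) → E) :=
  Finset.measurable_sum _ fun i _ => measurable_pi_apply _

variable (ν : Measure E) [IsProbabilityMeasure ν]

lemma hjMP (n k : ℕ) :
    MeasurePreserving (MeasurableEquiv.piEquivPiSubtypeProd (fun _ : Fin n => E)
        (fun i : Fin n => (i : ℕ) < k))
      (Measure.pi fun _ : Fin n => ν)
      ((Measure.pi fun _ : LoI n k => ν).prod (Measure.pi fun _ : HiI n k => ν)) :=
  measurePreserving_piEquivPiSubtypeProd (fun _ : Fin n => ν) _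

lemma hj_map_pair (n k : ℕ) :
    Measure.map (fun y : Fin n → E => (hjlo k y, hjhi k y)) (Measure.pi fun _ : Fin n => ν)
      = (Measure.pi fun _ : LoI n k => ν).prod (Measure.pi fun _ : HiI n k => ν) :=
  (hjMP ν n k).map_eq

lemma hj_map_lo (n k : ℕ) :
    Measure.map (hjlo k) (Measure.pi fun _ : Fin n => ν) = Measure.pi fun _ : LoI n k => ν := by
  have h := congrArg (Measure.map Prod.fst) (hj_map_pair ν n k)
  rw [Measure.map_map measurable_fst ((measurable_hjlo k).prodMk (measurable_hjhi k))] at h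
  simpa [Function.comp_def] using h

lemma hj_map_hi (n k : ℕ) :
    Measure.map (hjhi k) (Measure.pi fun _ : Fin n => ν) = Measure.pi fun _ : HiI n k => ν := by
  have h := congrArg (Measure.map Prod.snd) (hj_map_pair ν n k)
  rw [Measure.map_map measurable_snd ((measurable_hjlo k).prodMk (measurable_hjhi k))] at h
  simpa [Function.comp_def] using h

lemma hj_indep (n k : ℕ) :
    IndepFun (hjlo k) (hjhi k) (Measure.pi fun _ : Fin n => ν) := by
  rw [indepFun_iff_map_prod_eq_prod_map_map (measurable_hjlo k).aemeasurable
    (measurable_hjhi k).aemeasurable, hj_map_lo, hj_map_hi]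
  exact hj_map_pair ν n k


lemma hj_indep_meas (n k : ℕ) {B : Set (LoI n k → E)} {C : Set (HiI n k → E)}
    (hB : MeasurableSet B) (hC : MeasurableSet C) :
    (Measure.pi fun _ : Fin n => ν) (hjlo k ⁻¹' B ∩ hjhi k ⁻¹' C)
      = (Measure.pi fun _ : Fin n => ν) (hjlo k ⁻¹' B)
        * (Measure.pi fun _ : Fin n => ν) (hjhi k ⁻¹' C) :=
  (hj_indep ν n k).measure_inter_preimage_eq_mul _ _ hB hC

lemma hj_indep_integral (n k : ℕ) {B : Set (LoI n k → E)} (hB : MeasurableSet B)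
    {φ : (HiI n k → E) → ℝ} (hφ : Measurable φ)
    (hφi : Integrable (fun y : Fin n → E => φ (hjhi k y)) (Measure.pi fun _ : Fin n => ν)) :
    ∫ y, Set.indicator (hjlo k ⁻¹' B) (fun y => φ (hjhi k y)) y ∂(Measure.pi fun _ : Fin n => ν)
      = ((Measure.pi fun _ : Fin n => ν) (hjlo k ⁻¹' B)).toReal
        * ∫ y, φ (hjhi k y) ∂(Measure.pi fun _ : Fin n => ν) := by
  have heq : ∀ y : Fin n → E, Set.indicator (hjlo k ⁻¹' B) (fun y => φ (hjhi k y)) y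
      = (Set.indicator B (fun _ => (1:ℝ)) (hjlo k y)) * φ (hjhi k y) := by
    intro y
    by_cases h : hjlo k y ∈ B
    · simp [Set.indicator_of_mem, h, Set.mem_preimage]
    · simp [Set.indicator_of_notMem, h, Set.mem_preimage]
  have hindeq : (fun y : Fin n → E => Set.indicator B (fun _ => (1:ℝ)) (hjlo k y))
      = Set.indicator (hjlo k ⁻¹' B) (fun _ => (1:ℝ)) := by
    funext y; by_cases h : hjlo k y ∈ B <;> simp [h, Set.indicator]
  have hind2 : IndepFun (fun y : Fin n → E => Set.indicator B (fun _ => (1:ℝ)) (hjlo k y))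
      (fun y => φ (hjhi k y)) (Measure.pi fun _ : Fin n => ν) :=
    (hj_indep ν n k).comp (measurable_const.indicator hB) hφ
  have hii : Integrable (fun y : Fin n → E => Set.indicator B (fun _ => (1:ℝ)) (hjlo k y))
      (Measure.pi fun _ : Fin n => ν) := by
    rw [hindeq]
    exact (integrable_const (1:ℝ)).indicator (measurable_hjlo k hB)
  have h1 : ∫ y, Set.indicator (hjlo k ⁻¹' B) (fun y => φ (hjhi k y)) y
        ∂(Measure.pi fun _ : Fin n => ν)
      = ∫ y, (Set.indicator B (fun _ => (1:ℝ)) (hjlo k y)) * φ (hjhi k y)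
        ∂(Measure.pi fun _ : Fin n => ν) :=
    integral_congr_ae (.of_forall heq)
  have h2 : (∫ y, Set.indicator B (fun _ => (1:ℝ)) (hjlo k y) * φ (hjhi k y)
        ∂(Measure.pi fun _ : Fin n => ν))
      = (∫ y, Set.indicator B (fun _ => (1:ℝ)) (hjlo k y) ∂(Measure.pi fun _ : Fin n => ν))
        * ∫ y, φ (hjhi k y) ∂(Measure.pi fun _ : Fin n => ν) :=
    hind2.integral_mul_eq_mul_integral hii.aestronglyMeasurable hφi.aestronglyMeasurable
  rw [h1, h2]
  congr 1
  rw [hindeq, integral_indicator_const (1:ℝ) (measurable_hjlo k hB)]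
  simp [measureReal_def]

lemma hj_integral_hi (n k : ℕ) {φ : (HiI n k → E) → ℝ}
    (hφ : AEStronglyMeasurable φ (Measure.pi fun _ : HiI n k => ν)) :
    ∫ y, φ (hjhi k y) ∂(Measure.pi fun _ : Fin n => ν)
      = ∫ v, φ v ∂(Measure.pi fun _ : HiI n k => ν) := by
  have h2 : AEStronglyMeasurable φ (Measure.map (hjhi k) (Measure.pi fun _ : Fin n => ν)) := by
    rwa [hj_map_hi]
  rw [← integral_map (measurable_hjhi k).aemeasurable h2, hj_map_hi]

variable {L : ℝ}

lemma hj_int_pi {ι : Type} [Fintype ι] {β : Type*} [NormedAddCommGroup β]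
    {f : (ι → E) → β} {C : ℝ} (hm : AEStronglyMeasurable f (Measure.pi fun _ : ι => ν))
    (hae : ∀ᵐ x ∂ν, ‖x‖ < L)
    (h : ∀ y, (∀ i, ‖y i‖ ≤ L) → ‖f y‖ ≤ C) :
    Integrable f (Measure.pi fun _ : ι => ν) :=
  hj_integrable hm (((hj_ae_coord hae).mono fun y hy => h y fun i => (hy i).le))

lemma hj_card_le (n k : ℕ) : (Fintype.card (LoI n k) : ℝ) ≤ n := by
  have := Fintype.card_subtype_le (fun i : Fin n => (i : ℕ) < k)
  rw [Fintype.card_fin] at this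
  exact_mod_cast this

lemma hj_card_hi_le (n k : ℕ) : (Fintype.card (HiI n k) : ℝ) ≤ n := by
  have := Fintype.card_subtype_le (fun i : Fin n => ¬ (i : ℕ) < k)
  rw [Fintype.card_fin] at this
  exact_mod_cast this

lemma hjloS_bound (n k : ℕ) (hL : 0 ≤ L) {u : LoI n k → E} (hu : ∀ i, ‖u i‖ ≤ L) :
    ‖hjloS k u‖ ≤ n * L := by
  refine (hj_norm_sum_le hL Finset.univ u hu).trans ?_
  rw [Finset.card_univ]
  exact mul_le_mul_of_nonneg_right (hj_card_le n k) hL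

lemma hjhiS_bound (n k : ℕ) (hL : 0 ≤ L) {v : HiI n k → E} (hv : ∀ i, ‖v i‖ ≤ L) :
    ‖hjhiS k v‖ ≤ n * L := by
  refine (hj_norm_sum_le hL Finset.univ v hv).trans ?_
  rw [Finset.card_univ]
  exact mul_le_mul_of_nonneg_right (hj_card_hi_le n k) hL

lemma hjR_bound (n k : ℕ) (hL : 0 ≤ L) {y : Fin n → E} (hy : ∀ i, ‖y i‖ ≤ L) :
    ‖hjR k y‖ ≤ n * L := by
  refine (hj_norm_sum_le hL _ y hy).trans ?_
  refine mul_le_mul_of_nonneg_right ?_ hL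
  exact_mod_cast (Finset.card_filter_le _ _).trans (le_of_eq (Finset.card_univ.trans (Fintype.card_fin n)))

lemma hjS_bound (n k : ℕ) (hL : 0 ≤ L) {y : Fin n → E} (hy : ∀ i, ‖y i‖ ≤ L) :
    ‖hjS k y‖ ≤ n * L := by
  refine (hj_norm_sum_le hL _ y hy).trans ?_
  refine mul_le_mul_of_nonneg_right ?_ hL
  exact_mod_cast (Finset.card_filter_le _ _).trans (le_of_eq (Finset.card_univ.trans (Fintype.card_fin n)))

lemma hjTot_bound (n : ℕ) (hL : 0 ≤ L) {y : Fin n → E} (hy : ∀ i, ‖y i‖ ≤ L) :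
    ‖∑ i, y i‖ ≤ n * L := by
  rw [← hjS_total]
  exact hjS_bound n n hL hy

lemma hj_inner (n k : ℕ) (hL : 0 < L) (hae : ∀ᵐ x ∂ν, ‖x‖ < L) (v : HiI n k → E) :
    ‖(Fintype.card (LoI n k)) • (∫ x, x ∂ν) + hjhiS k v‖
      ≤ ∫ u, ‖hjloS k u + hjhiS k v‖ ∂(Measure.pi fun _ : LoI n k => ν) := by
  have hco : ∀ i : LoI n k, Integrable (fun u : LoI n k → E => u i)
      (Measure.pi fun _ : LoI n k => ν) := fun i =>
    hj_int_pi ν (measurable_pi_apply i).aestronglyMeasurable hae (fun y hy => hy i)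
  have hloSInt : Integrable (hjloS k : (LoI n k → E) → E)
      (Measure.pi fun _ : LoI n k => ν) :=
    integrable_finset_sum _ fun i _ => hco i
  have hmean : ∫ u, hjloS k u ∂(Measure.pi fun _ : LoI n k => ν)
      = (Fintype.card (LoI n k)) • (∫ x, x ∂ν) := by
    rw [show (hjloS k : (LoI n k → E) → E) = fun u => ∑ i, u i from rfl,
      integral_finset_sum _ fun i _ => hco i]
    simp [hj_integral_eval, Finset.card_univ]
  calc ‖(Fintype.card (LoI n k)) • (∫ x, x ∂ν) + hjhiS k v‖
      = ‖∫ u, (hjloS k u + hjhiS k v) ∂(Measure.pi fun _ : LoI n k => ν)‖ := by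
        rw [integral_add hloSInt (integrable_const _), integral_const, hmean]
        simp [measure_univ]
    _ ≤ ∫ u, ‖hjloS k u + hjhiS k v‖ ∂(Measure.pi fun _ : LoI n k => ν) :=
        norm_integral_le_integral_norm _


end Block

section ProdAe

lemma hj_ae_fst {α β : Type*} [MeasurableSpace α] [MeasurableSpace β] {μ : Measure α}
    {ρ : Measure β} [SFinite μ] [SFinite ρ] {q : α → Prop} (h : ∀ᵐ x ∂μ, q x) :
    ∀ᵐ z ∂(μ.prod ρ), q z.1 := by
  rw [ae_iff] at h ⊢
  have heq : {z : α × β | ¬ q z.1} = {x | ¬ q x} ×ˢ (Set.univ : Set β) := by ext z; simp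
  rw [heq, Measure.prod_prod, h, zero_mul]

lemma hj_ae_snd {α β : Type*} [MeasurableSpace α] [MeasurableSpace β] {μ : Measure α}
    {ρ : Measure β} [SFinite μ] [SFinite ρ] {q : β → Prop} (h : ∀ᵐ x ∂ρ, q x) :
    ∀ᵐ z ∂(μ.prod ρ), q z.2 := by
  rw [ae_iff] at h ⊢
  have heq : {z : α × β | ¬ q z.2} = (Set.univ : Set α) ×ˢ {x | ¬ q x} := by ext z; simp
  rw [heq, Measure.prod_prod, h, mul_zero]

end ProdAe

section Block2

variable (ν : Measure E) [IsProbabilityMeasure ν] {L : ℝ}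

lemma hj_J1 (n k : ℕ) (hL : 0 < L) (hae : ∀ᵐ x ∂ν, ‖x‖ < L) :
    ∫ y, ‖(Fintype.card (LoI n k)) • (∫ x, x ∂ν) + hjR k y‖ ∂(Measure.pi fun _ : Fin n => ν)
      ≤ ∫ y, ‖∑ i, y i‖ ∂(Measure.pi fun _ : Fin n => ν) := by
  classical
  set m := ∫ x, x ∂ν with hm
  set c : E := (Fintype.card (LoI n k)) • m with hc
  have haeL : ∀ᵐ u ∂(Measure.pi fun _ : LoI n k => ν), ∀ i, ‖u i‖ ≤ L :=
    (hj_ae_coord hae).mono fun u hu i => (hu i).le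
  have haeH : ∀ᵐ v ∂(Measure.pi fun _ : HiI n k => ν), ∀ i, ‖v i‖ ≤ L :=
    (hj_ae_coord hae).mono fun u hu i => (hu i).le
  have haeP : ∀ᵐ z ∂((Measure.pi fun _ : LoI n k => ν).prod (Measure.pi fun _ : HiI n k => ν)),
      (∀ i, ‖z.1 i‖ ≤ L) ∧ (∀ j, ‖z.2 j‖ ≤ L) := (hj_ae_fst haeL).and (hj_ae_snd haeH)
  have hmeasP : Measurable fun z : (LoI n k → E) × (HiI n k → E) => ‖hjloS k z.1 + hjhiS k z.2‖ :=
    (((measurable_hjloS k).comp measurable_fst).add ((measurable_hjhiS k).comp measurable_snd)).norm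
  have hInt : Integrable (fun z : (LoI n k → E) × (HiI n k → E) => ‖hjloS k z.1 + hjhiS k z.2‖)
      ((Measure.pi fun _ : LoI n k => ν).prod (Measure.pi fun _ : HiI n k => ν)) := by
    refine hj_integrable (C := n * L + n * L) hmeasP.aestronglyMeasurable
      (haeP.mono fun z hz => ?_)
    rw [norm_norm]
    exact (norm_add_le _ _).trans
      (add_le_add (hjloS_bound n k hL.le hz.1) (hjhiS_bound n k hL.le hz.2))
  have step1 : ∫ y, ‖∑ i, y i‖ ∂(Measure.pi fun _ : Fin n => ν)
      = ∫ z, ‖hjloS k z.1 + hjhiS k z.2‖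
          ∂((Measure.pi fun _ : LoI n k => ν).prod (Measure.pi fun _ : HiI n k => ν)) := by
    have hsm : AEStronglyMeasurable
        (fun z : (LoI n k → E) × (HiI n k → E) => ‖hjloS k z.1 + hjhiS k z.2‖)
        (Measure.map (fun y : Fin n → E => (hjlo k y, hjhi k y))
          (Measure.pi fun _ : Fin n => ν)) := by
      rw [hj_map_pair]
      exact hmeasP.aestronglyMeasurable
    rw [← hj_map_pair ν n k,
      integral_map ((measurable_hjlo k).prodMk (measurable_hjhi k)).aemeasurable hsm]
    refine integral_congr_ae (.of_forall fun y => ?_)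
    show ‖∑ i, y i‖ = ‖hjloS k (hjlo k y) + hjhiS k (hjhi k y)‖
    rw [← hjS_eq, ← hjR_eq, hjS_add_hjR]
  have step2 := integral_prod_symm _ hInt
  have hlow : Integrable (fun v : HiI n k → E => ‖c + hjhiS k v‖)
      (Measure.pi fun _ : HiI n k => ν) := by
    refine hj_int_pi ν ((measurable_const.add (measurable_hjhiS k)).norm.aestronglyMeasurable)
      hae (C := ‖c‖ + n * L) fun v hv => ?_
    rw [norm_norm]
    exact (norm_add_le _ _).trans (add_le_add le_rfl (hjhiS_bound n k hL.le hv))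
  have step3 : ∫ v, ‖c + hjhiS k v‖ ∂(Measure.pi fun _ : HiI n k => ν)
      ≤ ∫ v, (∫ u, ‖hjloS k u + hjhiS k v‖ ∂(Measure.pi fun _ : LoI n k => ν))
          ∂(Measure.pi fun _ : HiI n k => ν) :=
    integral_mono hlow hInt.integral_prod_right fun v => hj_inner ν n k hL hae v
  have step4 : ∫ y, ‖c + hjR k y‖ ∂(Measure.pi fun _ : Fin n => ν)
      = ∫ v, ‖c + hjhiS k v‖ ∂(Measure.pi fun _ : HiI n k => ν) := by
    rw [← hj_integral_hi ν n k (φ := fun v => ‖c + hjhiS k v‖)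
      ((measurable_const.add (measurable_hjhiS k)).norm.aestronglyMeasurable)]
    refine integral_congr_ae (.of_forall fun y => ?_)
    show ‖c + hjR k y‖ = ‖c + hjhiS k (hjhi k y)‖
    rw [hjR_eq]
  rw [step4, step1, step2]
  exact step3

lemma hj_J2 (n k : ℕ) (hL : 0 < L) (hae : ∀ᵐ x ∂ν, ‖x‖ < L) :
    ∫ y, ‖(Fintype.card (LoI n k)) • (∫ x, x ∂ν) + hjR k y‖ ^ 2
        ∂(Measure.pi fun _ : Fin n => ν)
      ≤ ∫ y, ‖∑ i, y i‖ ^ 2 ∂(Measure.pi fun _ : Fin n => ν) := by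
  classical
  set m := ∫ x, x ∂ν with hm
  set c : E := (Fintype.card (LoI n k)) • m with hc
  have haeL : ∀ᵐ u ∂(Measure.pi fun _ : LoI n k => ν), ∀ i, ‖u i‖ ≤ L :=
    (hj_ae_coord hae).mono fun u hu i => (hu i).le
  have haeH : ∀ᵐ v ∂(Measure.pi fun _ : HiI n k => ν), ∀ i, ‖v i‖ ≤ L :=
    (hj_ae_coord hae).mono fun u hu i => (hu i).le
  have haeP : ∀ᵐ z ∂((Measure.pi fun _ : LoI n k => ν).prod (Measure.pi fun _ : HiI n k => ν)),
      (∀ i, ‖z.1 i‖ ≤ L) ∧ (∀ j, ‖z.2 j‖ ≤ L) := (hj_ae_fst haeL).and (hj_ae_snd haeH)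
  have hmeasP : Measurable fun z : (LoI n k → E) × (HiI n k → E) =>
      ‖hjloS k z.1 + hjhiS k z.2‖ ^ 2 :=
    ((((measurable_hjloS k).comp measurable_fst).add
      ((measurable_hjhiS k).comp measurable_snd)).norm).pow_const 2
  have hInt : Integrable (fun z : (LoI n k → E) × (HiI n k → E) =>
        ‖hjloS k z.1 + hjhiS k z.2‖ ^ 2)
      ((Measure.pi fun _ : LoI n k => ν).prod (Measure.pi fun _ : HiI n k => ν)) := by
    refine hj_integrable (C := (n * L + n * L) ^ 2) hmeasP.aestronglyMeasurable
      (haeP.mono fun z hz => ?_)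
    rw [Real.norm_of_nonneg (by positivity)]
    refine pow_le_pow_left₀ (norm_nonneg _) ?_ 2
    exact (norm_add_le _ _).trans
      (add_le_add (hjloS_bound n k hL.le hz.1) (hjhiS_bound n k hL.le hz.2))
  have step1 : ∫ y, ‖∑ i, y i‖ ^ 2 ∂(Measure.pi fun _ : Fin n => ν)
      = ∫ z, ‖hjloS k z.1 + hjhiS k z.2‖ ^ 2
          ∂((Measure.pi fun _ : LoI n k => ν).prod (Measure.pi fun _ : HiI n k => ν)) := by
    have hsm : AEStronglyMeasurable
        (fun z : (LoI n k → E) × (HiI n k → E) => ‖hjloS k z.1 + hjhiS k z.2‖ ^ 2)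
        (Measure.map (fun y : Fin n → E => (hjlo k y, hjhi k y))
          (Measure.pi fun _ : Fin n => ν)) := by
      rw [hj_map_pair]
      exact hmeasP.aestronglyMeasurable
    rw [← hj_map_pair ν n k,
      integral_map ((measurable_hjlo k).prodMk (measurable_hjhi k)).aemeasurable hsm]
    refine integral_congr_ae (.of_forall fun y => ?_)
    show ‖∑ i, y i‖ ^ 2 = ‖hjloS k (hjlo k y) + hjhiS k (hjhi k y)‖ ^ 2
    rw [← hjS_eq, ← hjR_eq, hjS_add_hjR]
  have step2 := integral_prod_symm _ hInt
  have hlow : Integrable (fun v : HiI n k → E => ‖c + hjhiS k v‖ ^ 2)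
      (Measure.pi fun _ : HiI n k => ν) := by
    refine hj_int_pi ν (((measurable_const.add (measurable_hjhiS k)).norm.pow_const 2).aestronglyMeasurable)
      hae (C := (‖c‖ + n * L) ^ 2) fun v hv => ?_
    rw [Real.norm_of_nonneg (by positivity)]
    refine pow_le_pow_left₀ (norm_nonneg _) ?_ 2
    exact (norm_add_le _ _).trans (add_le_add le_rfl (hjhiS_bound n k hL.le hv))
  have hpt : ∀ v : HiI n k → E, ‖c + hjhiS k v‖ ^ 2
      ≤ ∫ u, ‖hjloS k u + hjhiS k v‖ ^ 2 ∂(Measure.pi fun _ : LoI n k => ν) := by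
    intro v
    have hg1 : Integrable (fun u : LoI n k → E => ‖hjloS k u + hjhiS k v‖)
        (Measure.pi fun _ : LoI n k => ν) := by
      refine hj_int_pi ν (((measurable_hjloS k).add measurable_const).norm.aestronglyMeasurable)
        hae (C := n * L + ‖hjhiS k v‖) fun u hu => ?_
      rw [norm_norm]
      exact (norm_add_le _ _).trans (add_le_add (hjloS_bound n k hL.le hu) le_rfl)
    have hg2 : Integrable (fun u : LoI n k → E => ‖hjloS k u + hjhiS k v‖ ^ 2)
        (Measure.pi fun _ : LoI n k => ν) := by
      refine hj_int_pi ν ((((measurable_hjloS k).add measurable_const).norm.pow_const 2).aestronglyMeasurable)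
        hae (C := (n * L + ‖hjhiS k v‖) ^ 2) fun u hu => ?_
      rw [Real.norm_of_nonneg (by positivity)]
      refine pow_le_pow_left₀ (norm_nonneg _) ?_ 2
      exact (norm_add_le _ _).trans (add_le_add (hjloS_bound n k hL.le hu) le_rfl)
    have h1 := hj_inner ν n k hL hae v
    have h2 := hj_sq_integral hg1 hg2
    exact (pow_le_pow_left₀ (norm_nonneg _) h1 2).trans h2
  have step3 : ∫ v, ‖c + hjhiS k v‖ ^ 2 ∂(Measure.pi fun _ : HiI n k => ν)
      ≤ ∫ v, (∫ u, ‖hjloS k u + hjhiS k v‖ ^ 2 ∂(Measure.pi fun _ : LoI n k => ν))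
          ∂(Measure.pi fun _ : HiI n k => ν) :=
    integral_mono hlow hInt.integral_prod_right hpt
  have step4 : ∫ y, ‖c + hjR k y‖ ^ 2 ∂(Measure.pi fun _ : Fin n => ν)
      = ∫ v, ‖c + hjhiS k v‖ ^ 2 ∂(Measure.pi fun _ : HiI n k => ν) := by
    rw [← hj_integral_hi ν n k (φ := fun v => ‖c + hjhiS k v‖ ^ 2)
      (((measurable_const.add (measurable_hjhiS k)).norm.pow_const 2).aestronglyMeasurable)]
    refine integral_congr_ae (.of_forall fun y => ?_)
    show ‖c + hjR k y‖ ^ 2 = ‖c + hjhiS k (hjhi k y)‖ ^ 2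
    rw [hjR_eq]
  rw [step4, step1, step2]
  exact step3


end Block2

section Decomp

def hjext (k : ℕ) (u : LoI n k → E) : Fin n → E :=
  fun i => if h : (i : ℕ) < k then u ⟨i, h⟩ else 0

lemma measurable_hjext (k : ℕ) : Measurable (hjext k : (LoI n k → E) → Fin n → E) := by
  refine measurable_pi_lambda _ fun i => ?_
  by_cases h : (i : ℕ) < k
  · simp only [hjext, h, dif_pos]
    exact measurable_pi_apply _
  · simp only [hjext, h, dif_neg, not_false_iff]
    exact measurable_const

lemma hjS_hjext (k j : ℕ) (hjk : j ≤ k) (y : Fin n → E) :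
    hjS j (hjext k (hjlo k y)) = hjS j y := by
  refine Finset.sum_congr rfl fun i hi => ?_
  rw [Finset.mem_filter] at hi
  have h : (i : ℕ) < k := lt_of_lt_of_le hi.2 hjk
  simp [hjext, hjlo, h]

/-- first passage event -/
def hjA (n : ℕ) (t : ℝ) (k : ℕ) : Set (Fin n → E) :=
  {y | t < ‖hjS k y‖ ∧ ∀ j < k, ‖hjS j y‖ ≤ t}

def hjB (n k : ℕ) (t : ℝ) : Set (LoI n k → E) :=
  {u | t < ‖hjS k (hjext k u)‖ ∧ ∀ j < k, ‖hjS j (hjext k u)‖ ≤ t}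

lemma measurable_hjB (n k : ℕ) (t : ℝ) : MeasurableSet (hjB n k t : Set (LoI n k → E)) := by
  have h1 : MeasurableSet {u : LoI n k → E | t < ‖hjS k (hjext k u)‖} :=
    measurableSet_lt measurable_const (((measurable_hjS k).comp (measurable_hjext k)).norm)
  have h2 : ∀ j : ℕ, MeasurableSet {u : LoI n k → E | ‖hjS j (hjext k u)‖ ≤ t} := fun j =>
    measurableSet_le (((measurable_hjS j).comp (measurable_hjext k)).norm) measurable_const
  have : hjB n k t = {u : LoI n k → E | t < ‖hjS k (hjext k u)‖}
      ∩ ⋂ j : ℕ, ⋂ (_ : j < k), {u : LoI n k → E | ‖hjS j (hjext k u)‖ ≤ t} := by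
    ext u; simp [hjB]
  rw [this]
  exact h1.inter (MeasurableSet.iInter fun j => MeasurableSet.iInter fun _ => h2 j)

lemma hjA_eq (t : ℝ) (k : ℕ) :
    (hjA n t k : Set (Fin n → E)) = hjlo k ⁻¹' hjB n k t := by
  ext y
  simp only [hjA, hjB, Set.mem_preimage, Set.mem_setOf_eq]
  constructor
  · rintro ⟨ha, hb⟩
    refine ⟨by rwa [hjS_hjext k k le_rfl], fun j hj => ?_⟩
    rw [hjS_hjext k j hj.le]
    exact hb j hj
  · rintro ⟨ha, hb⟩
    refine ⟨by rwa [hjS_hjext k k le_rfl] at ha, fun j hj => ?_⟩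
    have := hb j hj
    rwa [hjS_hjext k j hj.le] at this

lemma measurable_hjA (t : ℝ) (k : ℕ) : MeasurableSet (hjA n t k : Set (Fin n → E)) := by
  rw [hjA_eq]
  exact measurable_hjlo k (measurable_hjB n k t)

lemma hjA_disjoint (t : ℝ) {j k : ℕ} (hjk : j < k) : hjA n t j ∩ hjA (E := E) n t k = ∅ := by
  ext y
  simp only [Set.mem_inter_iff, Set.mem_empty_iff_false, iff_false]
  rintro ⟨⟨ha, -⟩, ⟨-, hb⟩⟩
  exact absurd ha (not_lt.2 (hb j hjk))

lemma hjS_zero (y : Fin n → E) : hjS 0 y = 0 := by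
  rw [hjS, Finset.filter_false_of_mem, Finset.sum_empty]
  intro i _
  omega

/-- the pointwise first-passage bound -/
lemma hj_pointwise {L t : ℝ} (hL : 0 ≤ L) (ht : 0 ≤ t) (y : Fin n → E)
    (hy : ∀ i, ‖y i‖ ≤ L) :
    ‖∑ i, y i‖ ^ 2 ≤ t ^ 2 + ∑ k ∈ Finset.range (n + 1),
      Set.indicator (hjA n t k) (fun y => (t + L + ‖hjR k y‖) ^ 2) y := by
  have hnn : ∀ k, 0 ≤ Set.indicator (hjA n t k) (fun y => (t + L + ‖hjR k y‖) ^ 2) y :=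
    fun k => Set.indicator_nonneg (fun z _ => sq_nonneg _) y
  by_cases htot : ‖∑ i, y i‖ ≤ t
  · have h1 : ‖∑ i, y i‖ ^ 2 ≤ t ^ 2 := pow_le_pow_left₀ (norm_nonneg _) htot 2
    have h2 : 0 ≤ ∑ k ∈ Finset.range (n + 1),
        Set.indicator (hjA n t k) (fun y => (t + L + ‖hjR k y‖) ^ 2) y :=
      Finset.sum_nonneg fun k _ => hnn k
    linarith
  · push_neg at htot
    classical
    have hPn : t < ‖hjS n y‖ := by rwa [hjS_total]
    have hex : ∃ j : ℕ, t < ‖hjS j y‖ := ⟨n, hPn⟩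
    set k := Nat.find hex with hkdef
    have hk : t < ‖hjS k y‖ := Nat.find_spec hex
    have hmin : ∀ j < k, ‖hjS j y‖ ≤ t := fun j hj =>
      not_lt.1 (Nat.find_min hex hj)
    have hkn : k ≤ n := Nat.find_le hPn
    have hk1 : 1 ≤ k := by
      rcases Nat.eq_zero_or_pos k with h0 | h1
      · exfalso
        rw [h0, hjS_zero] at hk
        simp only [norm_zero] at hk
        exact absurd hk (not_lt.2 ht)
      · exact h1
    have hyA : y ∈ hjA n t k := ⟨hk, hmin⟩
    have hk1n : k - 1 < n := by omega
    have hstep : hjS k y = hjS (k - 1) y + y ⟨k - 1, hk1n⟩ := by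
      have := hjS_succ (k - 1) hk1n y
      rwa [Nat.sub_add_cancel hk1] at this
    have hbound : ‖∑ i, y i‖ ≤ t + L + ‖hjR k y‖ := by
      calc ‖∑ i, y i‖ = ‖hjS (k - 1) y + y ⟨k - 1, hk1n⟩ + hjR k y‖ := by
            rw [← hjS_add_hjR k y, hstep]
        _ ≤ ‖hjS (k - 1) y‖ + ‖y ⟨k - 1, hk1n⟩‖ + ‖hjR k y‖ :=
            (norm_add_le _ _).trans (add_le_add_left (norm_add_le _ _) _)
        _ ≤ t + L + ‖hjR k y‖ :=
            add_le_add_left (add_le_add (hmin (k - 1) (by omega)) (hy _)) _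
    have hterm : ‖∑ i, y i‖ ^ 2
        ≤ Set.indicator (hjA n t k) (fun y => (t + L + ‖hjR k y‖) ^ 2) y := by
      rw [Set.indicator_of_mem hyA]
      exact pow_le_pow_left₀ (norm_nonneg _) hbound 2
    have hsum : Set.indicator (hjA n t k) (fun y => (t + L + ‖hjR k y‖) ^ 2) y
        ≤ ∑ k ∈ Finset.range (n + 1),
          Set.indicator (hjA n t k) (fun y => (t + L + ‖hjR k y‖) ^ 2) y :=
      Finset.single_le_sum (fun j _ => hnn j) (Finset.mem_range.2 (by omega))
    have := sq_nonneg t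
    linarith


end Decomp

section ER

variable (ν : Measure E) [IsProbabilityMeasure ν] {L : ℝ}

lemma hj_mean_norm (n k : ℕ) (hL : 0 < L) (hae : ∀ᵐ x ∂ν, ‖x‖ < L) :
    ‖(Fintype.card (LoI n k)) • (∫ x, x ∂ν)‖
      ≤ ∫ y, ‖∑ i, y i‖ ∂(Measure.pi fun _ : Fin n => ν) := by
  set m := ∫ x, x ∂ν with hm
  have hco : ∀ i : Fin n, Integrable (fun y : Fin n → E => y i)
      (Measure.pi fun _ : Fin n => ν) :=
    fun i => hj_int_pi ν (measurable_pi_apply i).aestronglyMeasurable hae fun y hy => hy i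
  have htot : ∫ y, (∑ i, y i) ∂(Measure.pi fun _ : Fin n => ν) = n • m := by
    rw [integral_finset_sum _ fun i _ => hco i]
    simp [hj_integral_eval ν, Finset.card_univ, hm]
  have h1 : ‖(Fintype.card (LoI n k)) • m‖ = (Fintype.card (LoI n k) : ℝ) * ‖m‖ := by
    rw [← Nat.cast_smul_eq_nsmul ℝ, norm_smul, Real.norm_natCast]
  have h2 : ‖(n : ℕ) • m‖ = (n : ℝ) * ‖m‖ := by
    rw [← Nat.cast_smul_eq_nsmul ℝ, norm_smul, Real.norm_natCast]
  calc ‖(Fintype.card (LoI n k)) • m‖ = (Fintype.card (LoI n k) : ℝ) * ‖m‖ := h1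
    _ ≤ (n : ℝ) * ‖m‖ := mul_le_mul_of_nonneg_right (hj_card_le n k) (norm_nonneg m)
    _ = ‖(n : ℕ) • m‖ := h2.symm
    _ = ‖∫ y, (∑ i, y i) ∂(Measure.pi fun _ : Fin n => ν)‖ := by rw [htot]
    _ ≤ ∫ y, ‖∑ i, y i‖ ∂(Measure.pi fun _ : Fin n => ν) := norm_integral_le_integral_norm _

lemma hj_ER1 (n k : ℕ) (hL : 0 < L) (hae : ∀ᵐ x ∂ν, ‖x‖ < L) :
    ∫ y, ‖hjR k y‖ ∂(Measure.pi fun _ : Fin n => ν)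
      ≤ 2 * ∫ y, ‖∑ i, y i‖ ∂(Measure.pi fun _ : Fin n => ν) := by
  set c : E := (Fintype.card (LoI n k)) • (∫ x, x ∂ν) with hc
  have haeP : ∀ᵐ y ∂(Measure.pi fun _ : Fin n => ν), ∀ i, ‖y i‖ ≤ L :=
    (hj_ae_coord hae).mono fun y hy i => (hy i).le
  have hint0 : Integrable (fun y : Fin n → E => ‖hjR k y‖) (Measure.pi fun _ : Fin n => ν) :=
    hj_integrable (C := n * L) (measurable_hjR k).norm.aestronglyMeasurable
      (haeP.mono fun y hy => by rw [norm_norm]; exact hjR_bound n k hL.le hy)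
  have hint1 : Integrable (fun y : Fin n → E => ‖c + hjR k y‖)
      (Measure.pi fun _ : Fin n => ν) :=
    hj_integrable (C := ‖c‖ + n * L)
      (measurable_const.add (measurable_hjR k)).norm.aestronglyMeasurable
      (haeP.mono fun y hy => by
        rw [norm_norm]
        exact (norm_add_le _ _).trans (add_le_add le_rfl (hjR_bound n k hL.le hy)))
  have hpt : ∀ y : Fin n → E, ‖hjR k y‖ ≤ ‖c + hjR k y‖ + ‖c‖ := fun y => by
    calc ‖hjR k y‖ = ‖(c + hjR k y) - c‖ := by rw [add_sub_cancel_left]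
      _ ≤ ‖c + hjR k y‖ + ‖c‖ := norm_sub_le _ _
  calc ∫ y, ‖hjR k y‖ ∂(Measure.pi fun _ : Fin n => ν)
      ≤ ∫ y, (‖c + hjR k y‖ + ‖c‖) ∂(Measure.pi fun _ : Fin n => ν) :=
        integral_mono hint0 (hint1.add (integrable_const _)) hpt
    _ = (∫ y, ‖c + hjR k y‖ ∂(Measure.pi fun _ : Fin n => ν)) + ‖c‖ := by
        rw [integral_add hint1 (integrable_const _), integral_const]
        simp [measure_univ]
    _ ≤ (∫ y, ‖∑ i, y i‖ ∂(Measure.pi fun _ : Fin n => ν))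
          + ∫ y, ‖∑ i, y i‖ ∂(Measure.pi fun _ : Fin n => ν) :=
        add_le_add (hj_J1 ν n k hL hae) (hj_mean_norm ν n k hL hae)
    _ = 2 * ∫ y, ‖∑ i, y i‖ ∂(Measure.pi fun _ : Fin n => ν) := by ring

lemma hj_ER2 (n k : ℕ) (hL : 0 < L) (hae : ∀ᵐ x ∂ν, ‖x‖ < L) :
    ∫ y, ‖hjR k y‖ ^ 2 ∂(Measure.pi fun _ : Fin n => ν)
      ≤ 2 * (∫ y, ‖∑ i, y i‖ ^ 2 ∂(Measure.pi fun _ : Fin n => ν))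
        + 2 * (∫ y, ‖∑ i, y i‖ ∂(Measure.pi fun _ : Fin n => ν)) ^ 2 := by
  set c : E := (Fintype.card (LoI n k)) • (∫ x, x ∂ν) with hc
  have haeP : ∀ᵐ y ∂(Measure.pi fun _ : Fin n => ν), ∀ i, ‖y i‖ ≤ L :=
    (hj_ae_coord hae).mono fun y hy i => (hy i).le
  have hint0 : Integrable (fun y : Fin n → E => ‖hjR k y‖ ^ 2)
      (Measure.pi fun _ : Fin n => ν) :=
    hj_integrable (C := (n * L) ^ 2) ((measurable_hjR k).norm.pow_const 2).aestronglyMeasurable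
      (haeP.mono fun y hy => by
        rw [Real.norm_of_nonneg (by positivity)]
        exact pow_le_pow_left₀ (norm_nonneg _) (hjR_bound n k hL.le hy) 2)
  have hint1 : Integrable (fun y : Fin n → E => ‖c + hjR k y‖ ^ 2)
      (Measure.pi fun _ : Fin n => ν) :=
    hj_integrable (C := (‖c‖ + n * L) ^ 2)
      ((measurable_const.add (measurable_hjR k)).norm.pow_const 2).aestronglyMeasurable
      (haeP.mono fun y hy => by
        rw [Real.norm_of_nonneg (by positivity)]
        refine pow_le_pow_left₀ (norm_nonneg _) ?_ 2
        exact (norm_add_le _ _).trans (add_le_add le_rfl (hjR_bound n k hL.le hy)))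
  have hpt : ∀ y : Fin n → E, ‖hjR k y‖ ^ 2 ≤ 2 * ‖c + hjR k y‖ ^ 2 + 2 * ‖c‖ ^ 2 := fun y => by
    have htri : ‖hjR k y‖ ≤ ‖c + hjR k y‖ + ‖c‖ := by
      calc ‖hjR k y‖ = ‖(c + hjR k y) - c‖ := by rw [add_sub_cancel_left]
        _ ≤ ‖c + hjR k y‖ + ‖c‖ := norm_sub_le _ _
    nlinarith [norm_nonneg (hjR k y), norm_nonneg (c + hjR k y), norm_nonneg c,
      sq_nonneg (‖c + hjR k y‖ - ‖c‖)]
  have hcle : ‖c‖ ≤ ∫ y, ‖∑ i, y i‖ ∂(Measure.pi fun _ : Fin n => ν) := hj_mean_norm ν n k hL hae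
  have hcsq : ‖c‖ ^ 2 ≤ (∫ y, ‖∑ i, y i‖ ∂(Measure.pi fun _ : Fin n => ν)) ^ 2 :=
    pow_le_pow_left₀ (norm_nonneg _) hcle 2
  have hJ2 := hj_J2 ν n k hL hae
  calc ∫ y, ‖hjR k y‖ ^ 2 ∂(Measure.pi fun _ : Fin n => ν)
      ≤ ∫ y, (2 * ‖c + hjR k y‖ ^ 2 + 2 * ‖c‖ ^ 2) ∂(Measure.pi fun _ : Fin n => ν) :=
        integral_mono hint0 ((hint1.const_mul 2).add (integrable_const _)) hpt
    _ = 2 * (∫ y, ‖c + hjR k y‖ ^ 2 ∂(Measure.pi fun _ : Fin n => ν)) + 2 * ‖c‖ ^ 2 := by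
        rw [integral_add (hint1.const_mul 2) (integrable_const _), integral_const,
          integral_const_mul]
        simp [measure_univ]
    _ ≤ 2 * (∫ y, ‖∑ i, y i‖ ^ 2 ∂(Measure.pi fun _ : Fin n => ν))
          + 2 * (∫ y, ‖∑ i, y i‖ ∂(Measure.pi fun _ : Fin n => ν)) ^ 2 := by
        have h2 : 2 * (∫ y, ‖c + hjR k y‖ ^ 2 ∂(Measure.pi fun _ : Fin n => ν))
            ≤ 2 * (∫ y, ‖∑ i, y i‖ ^ 2 ∂(Measure.pi fun _ : Fin n => ν)) := by linarith
        linarith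

end ER

section Core

variable (ν : Measure E) [IsProbabilityMeasure ν] {L : ℝ}

theorem hj_core (n : ℕ) (hL : 0 < L) (hae : ∀ᵐ x ∂ν, ‖x‖ < L) :
    ∫ y, ‖∑ i, y i‖ ^ 2 ∂(Measure.pi fun _ : Fin n => ν)
      ≤ 1300 * (∫ y, ‖∑ i, y i‖ ∂(Measure.pi fun _ : Fin n => ν)) ^ 2 + 1300 * L ^ 2 := by
  classical
  have haeP : ∀ᵐ y ∂(Measure.pi fun _ : Fin n => ν), ∀ i, ‖y i‖ ≤ L :=
    (hj_ae_coord hae).mono fun y hy i => (hy i).le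
  have hmsum : Measurable fun y : Fin n → E => ∑ i, y i :=
    Finset.measurable_sum _ fun i _ => measurable_pi_apply i
  have hint1 : Integrable (fun y : Fin n → E => ‖∑ i, y i‖) (Measure.pi fun _ : Fin n => ν) :=
    hj_integrable (C := n * L) hmsum.norm.aestronglyMeasurable
      (haeP.mono fun y hy => by rw [norm_norm]; exact hjTot_bound n hL.le hy)
  have hint2 : Integrable (fun y : Fin n → E => ‖∑ i, y i‖ ^ 2)
      (Measure.pi fun _ : Fin n => ν) :=
    hj_integrable (C := (n * L) ^ 2) (hmsum.norm.pow_const 2).aestronglyMeasurable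
      (haeP.mono fun y hy => by
        rw [Real.norm_of_nonneg (by positivity)]
        exact pow_le_pow_left₀ (norm_nonneg _) (hjTot_bound n hL.le hy) 2)
  have ha0 : 0 ≤ ∫ y, ‖∑ i, y i‖ ∂(Measure.pi fun _ : Fin n => ν) :=
    integral_nonneg fun y => norm_nonneg _
  have hW0 : 0 ≤ ∫ y, ‖∑ i, y i‖ ^ 2 ∂(Measure.pi fun _ : Fin n => ν) :=
    integral_nonneg fun y => sq_nonneg _
  rcases eq_or_lt_of_le ha0 with h0 | hapos
  · -- degenerate case : `a = 0`
    have hz : (fun y : Fin n → E => ‖∑ i, y i‖) =ᵐ[Measure.pi fun _ : Fin n => ν] 0 :=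
      (integral_eq_zero_iff_of_nonneg_ae (.of_forall fun y => norm_nonneg _) hint1).1 h0.symm
    have hz2 : (fun y : Fin n → E => ‖∑ i, y i‖ ^ 2) =ᵐ[Measure.pi fun _ : Fin n => ν]
        (0 : (Fin n → E) → ℝ) := by
      refine hz.mono fun y hy => ?_
      simp only [Pi.zero_apply] at hy ⊢
      rw [hy]
      ring
    have hWz : ∫ y, ‖∑ i, y i‖ ^ 2 ∂(Measure.pi fun _ : Fin n => ν) = 0 := by
      rw [integral_congr_ae hz2]
      simp
    rw [hWz]
    positivity
  · -- main case
    -- Markov bound for the total sum at level `16 a`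
    have hT : ((Measure.pi fun _ : Fin n => ν)
        {y : Fin n → E | 16 * (∫ y, ‖∑ i, y i‖ ∂(Measure.pi fun _ : Fin n => ν)) < ‖∑ i, y i‖}).toReal
        ≤ 1 / 16 := by
      have hm := mul_meas_ge_le_integral_of_nonneg (μ := Measure.pi fun _ : Fin n => ν)
        (f := fun y => ‖∑ i, y i‖) (.of_forall fun y => norm_nonneg _) hint1
        (16 * (∫ y, ‖∑ i, y i‖ ∂(Measure.pi fun _ : Fin n => ν)))
      have hsub : {y : Fin n → E |
            16 * (∫ y, ‖∑ i, y i‖ ∂(Measure.pi fun _ : Fin n => ν)) < ‖∑ i, y i‖}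
          ⊆ {y : Fin n → E |
            16 * (∫ y, ‖∑ i, y i‖ ∂(Measure.pi fun _ : Fin n => ν)) ≤ ‖∑ i, y i‖} :=
        fun y hy => by
          simp only [Set.mem_setOf_eq] at hy ⊢
          exact hy.le
      have hmono := ENNReal.toReal_mono (measure_ne_top _ _)
        (measure_mono (μ := Measure.pi fun _ : Fin n => ν) hsub)
      have hx0 : (0:ℝ) ≤ ((Measure.pi fun _ : Fin n => ν)
          {y : Fin n → E |
            16 * (∫ y, ‖∑ i, y i‖ ∂(Measure.pi fun _ : Fin n => ν)) ≤ ‖∑ i, y i‖}).toReal :=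
        ENNReal.toReal_nonneg
      rw [measureReal_def] at hm
      nlinarith [hmono, hm, hx0]
    -- Markov bound for the tail sums at level `4 a`
    have hRint : ∀ k, Integrable (fun y : Fin n → E => ‖hjR k y‖)
        (Measure.pi fun _ : Fin n => ν) := fun k =>
      hj_integrable (C := n * L) (measurable_hjR k).norm.aestronglyMeasurable
        (haeP.mono fun y hy => by rw [norm_norm]; exact hjR_bound n k hL.le hy)
    have hU : ∀ k, ((Measure.pi fun _ : Fin n => ν)
        {y : Fin n → E | 4 * (∫ y, ‖∑ i, y i‖ ∂(Measure.pi fun _ : Fin n => ν)) ≤ ‖hjR k y‖}).toReal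
        ≤ 1 / 2 := by
      intro k
      have hm := mul_meas_ge_le_integral_of_nonneg (μ := Measure.pi fun _ : Fin n => ν)
        (f := fun y => ‖hjR k y‖) (.of_forall fun y => norm_nonneg _) (hRint k)
        (4 * (∫ y, ‖∑ i, y i‖ ∂(Measure.pi fun _ : Fin n => ν)))
      have hER := hj_ER1 ν n k hL hae
      have hx0 : (0:ℝ) ≤ ((Measure.pi fun _ : Fin n => ν)
          {y : Fin n → E |
            4 * (∫ y, ‖∑ i, y i‖ ∂(Measure.pi fun _ : Fin n => ν)) ≤ ‖hjR k y‖}).toReal :=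
        ENNReal.toReal_nonneg
      rw [measureReal_def] at hm
      nlinarith [hm, hER, hx0]
    obtain ⟨a, ha⟩ : ∃ x : ℝ, x = ∫ y, ‖∑ i, y i‖ ∂(Measure.pi fun _ : Fin n => ν) := ⟨_, rfl⟩
    obtain ⟨W, hW⟩ : ∃ x : ℝ, x = ∫ y, ‖∑ i, y i‖ ^ 2 ∂(Measure.pi fun _ : Fin n => ν) := ⟨_, rfl⟩
    rw [← ha] at hT hU hapos ha0
    rw [← hW] at hW0
    rw [← ha, ← hW]
    have hAm : ∀ k, MeasurableSet (hjA n (20*a) k : Set (Fin n → E)) := fun k =>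
      measurable_hjA _ k
    have hTm : MeasurableSet {y : Fin n → E | 16*a < ‖∑ i, y i‖} :=
      measurableSet_lt measurable_const hmsum.norm
    have hAsub : ∀ k, hjA n (20*a) k
        ⊆ (hjA n (20*a) k ∩ {y : Fin n → E | 16*a < ‖∑ i, y i‖})
          ∪ (hjA n (20*a) k ∩ {y : Fin n → E | 4*a ≤ ‖hjR k y‖}) := by
      intro k y hy
      by_cases hR : 4*a ≤ ‖hjR k y‖
      · exact Or.inr ⟨hy, hR⟩
      · push_neg at hR
        refine Or.inl ⟨hy, ?_⟩
        have h1 : 20*a < ‖hjS k y‖ := hy.1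
        have h2 : ‖hjS k y‖ ≤ ‖∑ i, y i‖ + ‖hjR k y‖ := by
          calc ‖hjS k y‖ = ‖(∑ i, y i) - hjR k y‖ := by
                rw [← hjS_add_hjR k y, add_sub_cancel_right]
            _ ≤ ‖∑ i, y i‖ + ‖hjR k y‖ := norm_sub_le _ _
        show 16*a < ‖∑ i, y i‖
        linarith
    have hAineq : ∀ k, ((Measure.pi fun _ : Fin n => ν) (hjA n (20*a) k)).toReal
        ≤ 2 * ((Measure.pi fun _ : Fin n => ν)
            (hjA n (20*a) k ∩ {y : Fin n → E | 16*a < ‖∑ i, y i‖})).toReal := by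
      intro k
      have hle : (Measure.pi fun _ : Fin n => ν) (hjA n (20*a) k)
          ≤ (Measure.pi fun _ : Fin n => ν)
              (hjA n (20*a) k ∩ {y : Fin n → E | 16*a < ‖∑ i, y i‖})
            + (Measure.pi fun _ : Fin n => ν)
              (hjA n (20*a) k ∩ {y : Fin n → E | 4*a ≤ ‖hjR k y‖}) :=
        (measure_mono (hAsub k)).trans (measure_union_le _ _)
      have hprod : (Measure.pi fun _ : Fin n => ν)
            (hjA n (20*a) k ∩ {y : Fin n → E | 4*a ≤ ‖hjR k y‖})
          = (Measure.pi fun _ : Fin n => ν) (hjA n (20*a) k)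
            * (Measure.pi fun _ : Fin n => ν) {y : Fin n → E | 4*a ≤ ‖hjR k y‖} := by
        have hC : MeasurableSet {v : HiI n k → E | 4*a ≤ ‖hjhiS k v‖} :=
          measurableSet_le measurable_const (measurable_hjhiS k).norm
        have hUeq : {y : Fin n → E | 4*a ≤ ‖hjR k y‖}
            = hjhi k ⁻¹' {v : HiI n k → E | 4*a ≤ ‖hjhiS k v‖} := by
          ext y
          simp only [Set.mem_setOf_eq, Set.mem_preimage]
          rw [hjR_eq]
        rw [hjA_eq, hUeq]
        exact hj_indep_meas ν n k (measurable_hjB n k (20*a)) hC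
      have hr := ENNReal.toReal_mono
        (ENNReal.add_ne_top.2 ⟨measure_ne_top _ _, measure_ne_top _ _⟩) hle
      rw [ENNReal.toReal_add (measure_ne_top _ _) (measure_ne_top _ _)] at hr
      have hr2 : ((Measure.pi fun _ : Fin n => ν)
            (hjA n (20*a) k ∩ {y : Fin n → E | 4*a ≤ ‖hjR k y‖})).toReal
          = ((Measure.pi fun _ : Fin n => ν) (hjA n (20*a) k)).toReal
            * ((Measure.pi fun _ : Fin n => ν) {y : Fin n → E | 4*a ≤ ‖hjR k y‖}).toReal := by
        rw [hprod, ENNReal.toReal_mul]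
      have hU2 := hU k
      have hA0 : (0:ℝ) ≤ ((Measure.pi fun _ : Fin n => ν) (hjA n (20*a) k)).toReal :=
        ENNReal.toReal_nonneg
      have hmul := mul_le_mul_of_nonneg_left hU2 hA0
      linarith [hr, hr2, hmul]
    have hdisj : (↑(Finset.range (n+1)) : Set ℕ).PairwiseDisjoint
        (fun k => hjA n (20*a) k ∩ {y : Fin n → E | 16*a < ‖∑ i, y i‖}) := by
      intro j _ k _ hjk
      rcases lt_or_gt_of_ne hjk with h | h
      · refine Set.disjoint_left.2 fun y hyj hyk => ?_
        have hempty := hjA_disjoint (E := E) (n := n) (20*a) h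
        have hmem : y ∈ hjA n (20*a) j ∩ hjA n (20*a) k := ⟨hyj.1, hyk.1⟩
        rw [hempty] at hmem
        exact hmem
      · refine Set.disjoint_left.2 fun y hyj hyk => ?_
        have hempty := hjA_disjoint (E := E) (n := n) (20*a) h
        have hmem : y ∈ hjA n (20*a) k ∩ hjA n (20*a) j := ⟨hyk.1, hyj.1⟩
        rw [hempty] at hmem
        exact hmem
    have hsumA : ∑ k ∈ Finset.range (n+1), ((Measure.pi fun _ : Fin n => ν)
          (hjA n (20*a) k ∩ {y : Fin n → E | 16*a < ‖∑ i, y i‖})).toReal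
        ≤ ((Measure.pi fun _ : Fin n => ν) {y : Fin n → E | 16*a < ‖∑ i, y i‖}).toReal := by
      have hbu := measure_biUnion_finset (μ := Measure.pi fun _ : Fin n => ν) hdisj
        (fun k _ => (hAm k).inter hTm)
      have hsub2 : (⋃ k ∈ Finset.range (n+1),
            (hjA n (20*a) k ∩ {y : Fin n → E | 16*a < ‖∑ i, y i‖}))
          ⊆ {y : Fin n → E | 16*a < ‖∑ i, y i‖} := by
        intro y hy
        simp only [Set.mem_iUnion] at hy
        obtain ⟨k, -, hk2⟩ := hy
        exact hk2.2
      calc ∑ k ∈ Finset.range (n+1), ((Measure.pi fun _ : Fin n => ν)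
            (hjA n (20*a) k ∩ {y : Fin n → E | 16*a < ‖∑ i, y i‖})).toReal
          = ((∑ k ∈ Finset.range (n+1), (Measure.pi fun _ : Fin n => ν)
              (hjA n (20*a) k ∩ {y : Fin n → E | 16*a < ‖∑ i, y i‖}))).toReal :=
            (ENNReal.toReal_sum fun k _ => measure_ne_top _ _).symm
        _ = ((Measure.pi fun _ : Fin n => ν) (⋃ k ∈ Finset.range (n+1),
              (hjA n (20*a) k ∩ {y : Fin n → E | 16*a < ‖∑ i, y i‖}))).toReal := by
            rw [← hbu]
        _ ≤ ((Measure.pi fun _ : Fin n => ν)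
              {y : Fin n → E | 16*a < ‖∑ i, y i‖}).toReal :=
            ENNReal.toReal_mono (measure_ne_top _ _) (measure_mono hsub2)
    have hGsum : ∑ k ∈ Finset.range (n+1),
        ((Measure.pi fun _ : Fin n => ν) (hjA n (20*a) k)).toReal ≤ 1/8 := by
      have h1 : ∑ k ∈ Finset.range (n+1),
          ((Measure.pi fun _ : Fin n => ν) (hjA n (20*a) k)).toReal
          ≤ ∑ k ∈ Finset.range (n+1), 2 * ((Measure.pi fun _ : Fin n => ν)
              (hjA n (20*a) k ∩ {y : Fin n → E | 16*a < ‖∑ i, y i‖})).toReal :=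
        Finset.sum_le_sum fun k _ => hAineq k
      rw [← Finset.mul_sum] at h1
      linarith [hsumA, hT]
    have hRint2 : ∀ k, Integrable (fun y : Fin n → E => (20*a + L + ‖hjR k y‖)^2)
        (Measure.pi fun _ : Fin n => ν) := fun k =>
      hj_integrable (C := (20*a + L + n*L)^2)
        (((measurable_const.add (measurable_hjR k).norm)).pow_const 2).aestronglyMeasurable
        (haeP.mono fun y hy => by
          have hb := hjR_bound n k hL.le hy
          have h1 : (0:ℝ) ≤ 20*a + L + ‖hjR k y‖ := by positivity
          rw [Real.norm_of_nonneg (by positivity)]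
          nlinarith [norm_nonneg (hjR k y), hapos, hL])
    have hIndint : ∀ k, Integrable (Set.indicator (hjA n (20*a) k)
        (fun y : Fin n → E => (20*a + L + ‖hjR k y‖)^2)) (Measure.pi fun _ : Fin n => ν) :=
      fun k => (hRint2 k).indicator (hAm k)
    have h3 : ∀ k, ∫ y, Set.indicator (hjA n (20*a) k)
          (fun y : Fin n → E => (20*a + L + ‖hjR k y‖)^2) y ∂(Measure.pi fun _ : Fin n => ν)
        = ((Measure.pi fun _ : Fin n => ν) (hjA n (20*a) k)).toReal
          * ∫ y, (20*a + L + ‖hjR k y‖)^2 ∂(Measure.pi fun _ : Fin n => ν) := by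
      intro k
      have hφm : Measurable fun v : HiI n k → E => (20*a + L + ‖hjhiS k v‖)^2 :=
        (measurable_const.add (measurable_hjhiS k).norm).pow_const 2
      have hfunr : (fun y : Fin n → E => (20*a + L + ‖hjhiS k (hjhi k y)‖)^2)
          = fun y : Fin n → E => (20*a + L + ‖hjR k y‖)^2 := by
        funext y
        rw [← hjR_eq]
      have hφint : Integrable (fun y : Fin n → E => (20*a + L + ‖hjhiS k (hjhi k y)‖)^2)
          (Measure.pi fun _ : Fin n => ν) := by rw [hfunr]; exact hRint2 k
      have key := hj_indep_integral (E := E) ν n k (B := hjB n k (20*a))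
        (measurable_hjB n k (20*a)) (φ := fun v => (20*a + L + ‖hjhiS k v‖)^2) hφm hφint
      beta_reduce at key
      rw [hfunr, ← hjA_eq] at key
      exact key
    have hWle : W ≤ (20*a)^2 + ∑ k ∈ Finset.range (n+1),
        ((Measure.pi fun _ : Fin n => ν) (hjA n (20*a) k)).toReal
          * ∫ y, (20*a + L + ‖hjR k y‖)^2 ∂(Measure.pi fun _ : Fin n => ν) := by
      have hptae : ∀ᵐ y ∂(Measure.pi fun _ : Fin n => ν), ‖∑ i, y i‖^2
          ≤ (20*a)^2 + ∑ k ∈ Finset.range (n+1), Set.indicator (hjA n (20*a) k)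
            (fun y : Fin n → E => (20*a + L + ‖hjR k y‖)^2) y :=
        haeP.mono fun y hy => hj_pointwise hL.le (by linarith) y hy
      have hrint : Integrable (fun y : Fin n → E => (20*a)^2 + ∑ k ∈ Finset.range (n+1),
          Set.indicator (hjA n (20*a) k) (fun y : Fin n → E => (20*a + L + ‖hjR k y‖)^2) y)
          (Measure.pi fun _ : Fin n => ν) :=
        (integrable_const _).add (integrable_finset_sum _ fun k _ => hIndint k)
      have h1 := integral_mono_ae hint2 hrint hptae
      rw [← hW] at h1
      have h2 : ∫ y, ((20*a)^2 + ∑ k ∈ Finset.range (n+1), Set.indicator (hjA n (20*a) k)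
            (fun y : Fin n → E => (20*a + L + ‖hjR k y‖)^2) y) ∂(Measure.pi fun _ : Fin n => ν)
          = (20*a)^2 + ∑ k ∈ Finset.range (n+1), ∫ y, Set.indicator (hjA n (20*a) k)
            (fun y : Fin n → E => (20*a + L + ‖hjR k y‖)^2) y
              ∂(Measure.pi fun _ : Fin n => ν) := by
        rw [integral_add (integrable_const _) (integrable_finset_sum _ fun k _ => hIndint k),
          integral_const, integral_finset_sum _ fun k _ => hIndint k]
        simp [measure_univ]
      rw [h2] at h1
      refine h1.trans (le_of_eq ?_)
      congr 1
      exact Finset.sum_congr rfl fun k _ => h3 k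
    have hIk : ∀ k, ∫ y, (20*a + L + ‖hjR k y‖)^2 ∂(Measure.pi fun _ : Fin n => ν)
        ≤ 2*(20*a + L)^2 + 4*W + 4*a^2 := by
      intro k
      have hint0 : Integrable (fun y : Fin n → E => ‖hjR k y‖^2)
          (Measure.pi fun _ : Fin n => ν) :=
        hj_integrable (C := (n*L)^2) ((measurable_hjR k).norm.pow_const 2).aestronglyMeasurable
          (haeP.mono fun y hy => by
            rw [Real.norm_of_nonneg (by positivity)]
            exact pow_le_pow_left₀ (norm_nonneg _) (hjR_bound n k hL.le hy) 2)
      have hpt2 : ∀ y : Fin n → E, (20*a + L + ‖hjR k y‖)^2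
          ≤ 2*(20*a + L)^2 + 2*‖hjR k y‖^2 :=
        fun y => by nlinarith [sq_nonneg (20*a + L - ‖hjR k y‖)]
      have hc1 : ∫ y, (20*a + L + ‖hjR k y‖)^2 ∂(Measure.pi fun _ : Fin n => ν)
          ≤ ∫ y, (2*(20*a+L)^2 + 2*‖hjR k y‖^2) ∂(Measure.pi fun _ : Fin n => ν) :=
        integral_mono (hRint2 k) ((integrable_const _).add (hint0.const_mul 2)) hpt2
      have hc2 : ∫ y, (2*(20*a+L)^2 + 2*‖hjR k y‖^2) ∂(Measure.pi fun _ : Fin n => ν)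
          = 2*(20*a+L)^2 + 2*∫ y, ‖hjR k y‖^2 ∂(Measure.pi fun _ : Fin n => ν) := by
        rw [integral_add (integrable_const _) (hint0.const_mul 2), integral_const,
          integral_const_mul]
        simp [measure_univ]
      have hER2 := hj_ER2 ν n k hL hae
      rw [← hW, ← ha] at hER2
      linarith [hc1, hc2, hER2]
    have hterm : ∀ k ∈ Finset.range (n+1),
        ((Measure.pi fun _ : Fin n => ν) (hjA n (20*a) k)).toReal
            * ∫ y, (20*a + L + ‖hjR k y‖)^2 ∂(Measure.pi fun _ : Fin n => ν)
          ≤ ((Measure.pi fun _ : Fin n => ν) (hjA n (20*a) k)).toReal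
            * (2*(20*a + L)^2 + 4*W + 4*a^2) :=
      fun k _ => mul_le_mul_of_nonneg_left (hIk k) ENNReal.toReal_nonneg
    have hsum2 : ∑ k ∈ Finset.range (n+1),
        ((Measure.pi fun _ : Fin n => ν) (hjA n (20*a) k)).toReal
            * ∫ y, (20*a + L + ‖hjR k y‖)^2 ∂(Measure.pi fun _ : Fin n => ν)
        ≤ (∑ k ∈ Finset.range (n+1),
            ((Measure.pi fun _ : Fin n => ν) (hjA n (20*a) k)).toReal)
          * (2*(20*a + L)^2 + 4*W + 4*a^2) := by
      rw [Finset.sum_mul]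
      exact Finset.sum_le_sum hterm
    have hZ0 : (0:ℝ) ≤ 2*(20*a + L)^2 + 4*W + 4*a^2 := by
      have := sq_nonneg (20*a + L)
      have := sq_nonneg a
      linarith
    have hsum3 : (∑ k ∈ Finset.range (n+1),
          ((Measure.pi fun _ : Fin n => ν) (hjA n (20*a) k)).toReal)
          * (2*(20*a + L)^2 + 4*W + 4*a^2)
        ≤ (1/8) * (2*(20*a + L)^2 + 4*W + 4*a^2) :=
      mul_le_mul_of_nonneg_right hGsum hZ0
    have hfin : W ≤ (20*a)^2 + (1/8)*(2*(20*a + L)^2 + 4*W + 4*a^2) := by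
      linarith [hWle, hsum2, hsum3]
    nlinarith [hfin, sq_nonneg (a - L), sq_nonneg (a + L), hapos.le, hL.le,
      mul_nonneg hapos.le hL.le]


end Core

end HJAux

/-- There is an absolute constant `c ∈ (0,∞)` such that if `X_1, …, X_n` are i.i.d.
Banach-valued random variables with `‖X_i‖ < L` almost surely, and
`S_n = X_1 + ⋯ + X_n`, then `(E[‖S_n‖])² ≥ c (E[‖S_n‖²] − c⁻¹ L²)`. -/
theorem stmt_4 :
    ∃ c : ℝ, 0 < c ∧
      ∀ (Ω : Type) (_ : MeasurableSpace Ω) (μ : Measure Ω), IsProbabilityMeasure μ →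
      ∀ (E : Type) (_ : NormedAddCommGroup E), ∀ (_ : NormedSpace ℝ E) (_ : CompleteSpace E)
        (mE : MeasurableSpace E), BorelSpace E → SecondCountableTopology E →
      ∀ (n : ℕ) (hn : 0 < n) (X : Fin n → Ω → E) (L : ℝ), 0 < L →
        (∀ k, Measurable (X k)) →
        iIndepFun (m := fun _ => mE) X μ →
        (∀ k, IdentDistrib (X k) (X ⟨0, hn⟩) μ μ) →
        (∀ k, ∀ᵐ ω ∂μ, ‖X k ω‖ < L) →
        c * ((∫ ω, ‖∑ k, X k ω‖ ^ 2 ∂μ) - c⁻¹ * L ^ 2) ≤ (∫ ω, ‖∑ k, X k ω‖ ∂μ) ^ 2 := by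
  refine ⟨(1300:ℝ)⁻¹, by norm_num, ?_⟩
  intro Ω mΩ μ hμ E hnacg hnsp hcsp mE hbsp hsct n hn X L hL hXm hXind hXid hXae
  haveI : IsProbabilityMeasure (Measure.map (X ⟨0, hn⟩) μ) :=
    Measure.isProbabilityMeasure_map (hXm _).aemeasurable
  have hνae : ∀ᵐ x ∂(Measure.map (X ⟨0, hn⟩) μ), ‖x‖ < L := by
    rw [ae_map_iff (hXm _).aemeasurable (measurableSet_lt measurable_norm measurable_const)]
    exact hXae _
  have hφm : Measurable fun ω => (fun i => X i ω : Fin n → E) :=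
    measurable_pi_lambda _ fun i => hXm i
  have hmap : Measure.map (fun ω => fun i => X i ω) μ
      = Measure.pi (fun _ : Fin n => Measure.map (X ⟨0, hn⟩) μ) := by
    refine (Measure.pi_eq fun s hs => ?_).symm
    rw [Measure.map_apply hφm (MeasurableSet.univ_pi hs)]
    have hpre : (fun ω => fun i => X i ω) ⁻¹' (Set.pi Set.univ s)
        = ⋂ i ∈ (Finset.univ : Finset (Fin n)), X i ⁻¹' s i := by
      ext ω
      simp [Set.mem_pi]
    rw [hpre, hXind.measure_inter_preimage_eq_mul Finset.univ (fun i _ => hs i)]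
    refine Finset.prod_congr rfl fun i _ => ?_
    rw [← Measure.map_apply (hXm i) (hs i), (hXid i).map_eq]
  have htrans1 : ∫ ω, ‖∑ k, X k ω‖ ∂μ
      = ∫ y, ‖∑ i, y i‖ ∂(Measure.pi fun _ : Fin n => Measure.map (X ⟨0, hn⟩) μ) := by
    have hf : AEStronglyMeasurable (fun y : Fin n → E => ‖∑ i, y i‖)
        (Measure.map (fun ω => fun i => X i ω) μ) :=
      ((Finset.measurable_sum _ fun i _ => measurable_pi_apply i).norm).aestronglyMeasurable
    have h := integral_map hφm.aemeasurable hf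
    rw [hmap] at h
    exact h.symm
  have htrans2 : ∫ ω, ‖∑ k, X k ω‖ ^ 2 ∂μ
      = ∫ y, ‖∑ i, y i‖ ^ 2 ∂(Measure.pi fun _ : Fin n => Measure.map (X ⟨0, hn⟩) μ) := by
    have hf : AEStronglyMeasurable (fun y : Fin n → E => ‖∑ i, y i‖ ^ 2)
        (Measure.map (fun ω => fun i => X i ω) μ) :=
      (((Finset.measurable_sum _ fun i _ => measurable_pi_apply i).norm).pow_const
        2).aestronglyMeasurable
    have h := integral_map hφm.aemeasurable hf
    rw [hmap] at h
    exact h.symm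
  have hcore := hj_core (Measure.map (X ⟨0, hn⟩) μ) n hL hνae
  rw [← htrans1, ← htrans2] at hcore
  have hinv : (((1300:ℝ)⁻¹)⁻¹) = 1300 := by norm_num
  rw [hinv]
  nlinarith [hcore, sq_nonneg (∫ ω, ‖∑ k, X k ω‖ ∂μ), sq_nonneg L]
end

section
/- Let X_1, …, X_n be independent symmetric Banach-valued random variables which regularly cover a random variable X̃_1, and let X̃_1, …, X̃_n be independent identically distributed copies of X̃_1. Then for all λ ≥ 0, P(‖X_1 + ⋯ + X_n‖ ≥ λ) ≤ 8 · P(‖X̃_1 + ⋯ + X̃_n‖ ≥ λ/2). -/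
open MeasureTheory ProbabilityTheory Finset
open scoped ENNReal NNReal

open Finset

/-- Number of surjections from `Fin m` onto a `k`-element set. -/
def surjCard : ℕ → ℕ → ℕ
  | 0, 0 => 1
  | 0, _+1 => 0
  | m+1, k => k * (surjCard m (k-1) + surjCard m k)

lemma surjCard_zero_right : ∀ m, 0 < m → surjCard m 0 = 0
  | _+1, _ => by simp [surjCard]

lemma surjCard_succ_left (m k : ℕ) :
    surjCard (m+1) k = k * (surjCard m (k-1) + surjCard m k) := rfl

/-- The key monotonicity: `surj(n,d) ≤ surj(n,n-d)` for `2d ≤ n`. -/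
lemma surjCard_le (n d : ℕ) (h : 2*d ≤ n) : surjCard n d ≤ surjCard n (n - d) := by
  induction n generalizing d with
  | zero =>
    have hd : d = 0 := by omega
    subst hd
    simp [surjCard]
  | succ m ih =>
    rcases Nat.eq_or_lt_of_le h with heq | hlt
    · have : m + 1 - d = d := by omega
      rw [this]
    · have h2 : 2*d ≤ m := by omega
      rcases Nat.eq_zero_or_pos d with rfl | hd
      · simp [surjCard_zero_right (m+1) (by omega)]
      · obtain ⟨e, rfl⟩ : ∃ e, d = e + 1 := ⟨d-1, by omega⟩
        have hnd : m + 1 - (e+1) = (m - e - 1) + 1 := by omega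
        rw [hnd, surjCard_succ_left, surjCard_succ_left]
        have h1 : surjCard m e ≤ surjCard m (m - e) := ih e (by omega)
        have h2' : surjCard m (e+1) ≤ surjCard m (m - (e+1)) := ih (e+1) h2
        have e1 : e + 1 - 1 = e := by omega
        have e2 : m - e - 1 + 1 - 1 = m - (e+1) := by omega
        have e3 : m - e - 1 + 1 = m - e := by omega
        rw [e1, e2, e3]
        exact Nat.mul_le_mul (by omega) (by omega)

lemma insert_eq_iff_aux {k : ℕ} {c : Fin k} {C S : Finset (Fin k)} (hc : c ∈ C) :
    insert c S = C ↔ S = C ∨ S = C.erase c := by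
  constructor
  · intro h
    have hS : S ⊆ C := h ▸ subset_insert c S
    have hCS : C.erase c ⊆ S := by
      intro x hx
      rcases mem_erase.mp hx with ⟨hxc, hxC⟩
      have := h ▸ hxC
      rcases mem_insert.mp this with h' | h'
      · exact absurd h' hxc
      · exact h'
    by_cases hcS : c ∈ S
    · left
      refine Subset.antisymm hS (fun x hx => ?_)
      by_cases hxc : x = c
      · exact hxc ▸ hcS
      · exact hCS (mem_erase.mpr ⟨hxc, hx⟩)
    · right
      refine Subset.antisymm (fun x hx => mem_erase.mpr ⟨?_, hS hx⟩) hCS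
      rintro rfl; exact hcS hx
  · rintro (rfl | rfl)
    · exact insert_eq_self.mpr hc
    · exact insert_erase hc

lemma image_succ_decomp {m k : ℕ} (f : Fin (m+1) → Fin k) :
    image f univ = insert (f 0) (image (f ∘ Fin.succ) univ) := by
  rw [Fin.univ_succ]
  rw [cons_eq_insert, image_insert, map_eq_image, image_image]
  rfl

/-- Counting functions with given image. -/
lemma card_image_eq_surjCard (m k : ℕ) (C : Finset (Fin k)) :
    ((univ : Finset (Fin m → Fin k)).filter (fun f => image f univ = C)).card
      = surjCard m C.card := by
  induction m generalizing C with
  | zero =>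
    have himg : ∀ f : Fin 0 → Fin k, image f univ = ∅ := by
      intro f
      simp [Finset.univ_eq_empty]
    rcases C.eq_empty_or_nonempty with rfl | hC
    · simp only [himg]
      simp [surjCard, Finset.filter_true_of_mem, Finset.card_univ]
    · obtain ⟨e, he⟩ : ∃ e, C.card = e + 1 := ⟨C.card - 1, by have := hC.card_pos; omega⟩
      rw [he]
      show _ = 0
      rw [Finset.card_eq_zero, Finset.filter_eq_empty_iff]
      intro f _
      rw [himg f]
      intro h
      exact hC.ne_empty h.symm
  | succ m ih =>
    classical
    have key : ∀ c : Fin k,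
        ((univ : Finset (Fin (m+1) → Fin k)).filter
          (fun f => image f univ = C ∧ f 0 = c)).card
        = if c ∈ C then surjCard m (C.card - 1) + surjCard m C.card else 0 := by
      intro c
      have hbij : ((univ : Finset (Fin (m+1) → Fin k)).filter
            (fun f => image f univ = C ∧ f 0 = c)).card
          = ((univ : Finset (Fin m → Fin k)).filter
            (fun g => insert c (image g univ) = C)).card := by
        apply Finset.card_nbij' (i := fun f => f ∘ Fin.succ) (j := fun g => Fin.cons c g)
        · intro f hf
          simp only [Finset.mem_coe, mem_filter, mem_univ, true_and] at hf ⊢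
          rw [← hf.2, ← image_succ_decomp]
          exact hf.1
        · intro g hg
          simp only [Finset.mem_coe, mem_filter, mem_univ, true_and] at hg ⊢
          constructor
          · rw [image_succ_decomp]
            simpa using hg
          · simp
        · intro f hf
          simp only [Finset.mem_coe, mem_filter, mem_univ, true_and] at hf
          funext i
          rcases Fin.eq_zero_or_eq_succ i with rfl | ⟨j, rfl⟩
          · simp [hf.2]
          · simp
        · intro g hg
          funext i
          simp
      rw [hbij]
      by_cases hc : c ∈ C
      · rw [if_pos hc]
        have hsplit : ((univ : Finset (Fin m → Fin k)).filter
              (fun g => insert c (image g univ) = C))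
            = ((univ : Finset (Fin m → Fin k)).filter (fun g => image g univ = C))
              ∪ ((univ : Finset (Fin m → Fin k)).filter
                  (fun g => image g univ = C.erase c)) := by
          rw [← Finset.filter_or]
          apply Finset.filter_congr
          intro g _
          exact insert_eq_iff_aux hc
        rw [hsplit, Finset.card_union_of_disjoint, ih, ih, Finset.card_erase_of_mem hc]
        · ring
        · rw [Finset.disjoint_filter]
          intro g _ h1 h2
          rw [h1] at h2
          have : c ∈ C.erase c := h2 ▸ hc
          simp at this
      · rw [if_neg hc]
        rw [Finset.card_eq_zero, Finset.filter_eq_empty_iff]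
        intro g _
        intro h
        exact hc (h ▸ mem_insert_self c _)
    have hfib : ((univ : Finset (Fin (m+1) → Fin k)).filter
          (fun f => image f univ = C)).card
        = ∑ c : Fin k, ((univ : Finset (Fin (m+1) → Fin k)).filter
            (fun f => image f univ = C ∧ f 0 = c)).card := by
      rw [Finset.card_eq_sum_card_fiberwise (f := fun f : Fin (m+1) → Fin k => f 0)
        (t := univ) (fun x _ => mem_univ _)]
      apply Finset.sum_congr rfl
      intro c _
      congr 1
      rw [Finset.filter_filter]
    rw [hfib]
    simp only [key]
    rw [Finset.sum_ite_mem, Finset.univ_inter, Finset.sum_const, surjCard_succ_left]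
    simp [mul_comm]

section Counting

variable {n : ℕ} {Q : Finset (Fin n) → Prop} [DecidablePred Q]

/-- Double counting (LYM-style): an up-closed family has at least as many sets of
size `n-d` as of size `d`, when `2d ≤ n`. -/
lemma upclosed_card_le (hup : ∀ {B C : Finset (Fin n)}, B ⊆ C → Q B → Q C)
    {d : ℕ} (hd : 2*d ≤ n) :
    ((univ : Finset (Finset (Fin n))).filter (fun D => Q D ∧ D.card = d)).card
      ≤ ((univ : Finset (Finset (Fin n))).filter (fun D => Q D ∧ D.card = n - d)).card := by
  classical
  set A := (univ : Finset (Finset (Fin n))).filter (fun D => Q D ∧ D.card = d) with hA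
  set B' := (univ : Finset (Finset (Fin n))).filter (fun D => Q D ∧ D.card = n - d) with hB
  set P := Finset.powersetCard (n-d) (univ : Finset (Fin n)) with hP
  have h1 : ∀ C ∈ A, ((P.filter (fun D => C ⊆ D)).card = (n-d).choose (n-2*d)) := by
    intro C hC
    rcases Finset.mem_filter.mp hC with ⟨-, hQC, hcard⟩
    have hcompl : (Cᶜ : Finset (Fin n)).card = n - d := by
      rw [Finset.card_compl, hcard, Fintype.card_fin]
    rw [show ((P.filter (fun D => C ⊆ D)).card)
        = (Finset.powersetCard (n-2*d) (Cᶜ : Finset (Fin n))).card from ?_,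
      Finset.card_powersetCard, hcompl]
    apply Finset.card_nbij' (i := fun D => D \ C) (j := fun e => C ∪ e)
    · intro D hD
      rcases Finset.mem_filter.mp hD with ⟨hDP, hCD⟩
      rcases Finset.mem_powersetCard.mp hDP with ⟨-, hDcard⟩
      simp only [Finset.mem_coe]; rw [Finset.mem_powersetCard]
      constructor
      · intro x hx
        rcases Finset.mem_sdiff.mp hx with ⟨-, hxC⟩
        simpa using hxC
      · rw [Finset.card_sdiff_of_subset hCD, hDcard, hcard]
        omega
    · intro e he
      rcases Finset.mem_powersetCard.mp he with ⟨heC, hecard⟩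
      have hdisj : Disjoint C e := by
        rw [Finset.disjoint_left]
        intro x hxC hxe
        have := heC hxe
        simp only [Finset.mem_compl] at this
        exact this hxC
      simp only [Finset.mem_coe]; rw [Finset.mem_filter, Finset.mem_powersetCard]
      refine ⟨⟨Finset.subset_univ _, ?_⟩, Finset.subset_union_left⟩
      rw [Finset.card_union_of_disjoint hdisj, hcard, hecard]
      omega
    · intro D hD
      rcases Finset.mem_filter.mp hD with ⟨-, hCD⟩
      exact Finset.union_sdiff_of_subset hCD
    · intro e he
      rcases Finset.mem_powersetCard.mp he with ⟨heC, -⟩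
      apply Finset.union_sdiff_cancel_left
      rw [Finset.disjoint_left]
      intro x hxC hxe
      have := heC hxe
      simp only [Finset.mem_compl] at this
      exact this hxC
  have h2 : ∀ D ∈ P, (A.filter (fun C => C ⊆ D)).card
      ≤ if Q D ∧ D.card = n - d then (n-d).choose d else 0 := by
    intro D hD
    rcases Finset.mem_powersetCard.mp hD with ⟨-, hDcard⟩
    rcases (A.filter (fun C => C ⊆ D)).eq_empty_or_nonempty with hemp | ⟨C₀, hC₀⟩
    · rw [hemp]; simp
    · rcases Finset.mem_filter.mp hC₀ with ⟨hC₀A, hC₀D⟩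
      rcases Finset.mem_filter.mp hC₀A with ⟨-, hQC₀, -⟩
      rw [if_pos ⟨hup hC₀D hQC₀, hDcard⟩]
      calc (A.filter (fun C => C ⊆ D)).card
          ≤ (Finset.powersetCard d D).card := by
            apply Finset.card_le_card
            intro C hC
            rcases Finset.mem_filter.mp hC with ⟨hCA, hCD⟩
            rcases Finset.mem_filter.mp hCA with ⟨-, -, hCcard⟩
            exact Finset.mem_powersetCard.mpr ⟨hCD, hCcard⟩
        _ = (n-d).choose d := by rw [Finset.card_powersetCard, hDcard]
  -- double count
  have key : A.card * ((n-d).choose (n-2*d)) ≤ B'.card * ((n-d).choose d) := by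
    have lhs : A.card * ((n-d).choose (n-2*d))
        = ∑ C ∈ A, (P.filter (fun D => C ⊆ D)).card := by
      rw [Finset.sum_congr rfl h1, Finset.sum_const, smul_eq_mul]
    have swap : ∑ C ∈ A, (P.filter (fun D => C ⊆ D)).card
        = ∑ D ∈ P, (A.filter (fun C => C ⊆ D)).card := by
      simp only [Finset.card_filter]
      rw [Finset.sum_comm]
    rw [lhs, swap]
    calc ∑ D ∈ P, (A.filter (fun C => C ⊆ D)).card
        ≤ ∑ D ∈ P, if Q D ∧ D.card = n - d then (n-d).choose d else 0 :=
          Finset.sum_le_sum h2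
      _ = ∑ D ∈ P.filter (fun D => Q D ∧ D.card = n - d), (n-d).choose d := by
          rw [Finset.sum_filter]
      _ ≤ B'.card * ((n-d).choose d) := by
          rw [Finset.sum_const, smul_eq_mul]
          apply Nat.mul_le_mul_right
          apply Finset.card_le_card
          intro D hD
          rcases Finset.mem_filter.mp hD with ⟨-, h⟩
          exact Finset.mem_filter.mpr ⟨Finset.mem_univ _, h⟩
  have hsymm : (n-d).choose (n-2*d) = (n-d).choose d := by
    have : n - 2*d = (n-d) - d := by omega
    rw [this, Nat.choose_symm (by omega)]
  rw [hsymm] at key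
  exact Nat.le_of_mul_le_mul_right key (Nat.choose_pos (by omega))

end Counting

section MainCount

variable {n : ℕ} {Q : Finset (Fin n) → Prop} [DecidablePred Q]

lemma count_Q_image (hup : ∀ {B C : Finset (Fin n)}, B ⊆ C → Q B → Q C)
    (hpair : ∀ C : Finset (Fin n), Q C ∨ Q Cᶜ) :
    n^n ≤ 2 * ((univ : Finset (Fin n → Fin n)).filter (fun κ => Q (image κ univ))).card := by
  classical
  set G := (univ : Finset (Fin n → Fin n)).filter (fun κ => Q (image κ univ)) with hG
  set H := (univ : Finset (Fin n → Fin n)).filter (fun κ => Q ((image κ univ)ᶜ)) with hH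
  -- card of a fiber family
  have cardfib : ∀ (R : Finset (Fin n → Fin n)) (pred : Finset (Fin n) → Prop)
      [DecidablePred pred], R = (univ : Finset (Fin n → Fin n)).filter
        (fun κ => pred (image κ univ)) →
      R.card = ∑ C ∈ (univ : Finset (Finset (Fin n))).filter pred, surjCard n C.card := by
    intro R pred _ hR
    rw [Finset.card_eq_sum_card_fiberwise (f := fun κ => image κ univ)
      (t := (univ : Finset (Finset (Fin n))).filter pred) ?_]
    · apply Finset.sum_congr rfl
      intro C hC
      rcases Finset.mem_filter.mp hC with ⟨-, hpC⟩
      rw [← card_image_eq_surjCard n n C]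
      congr 1
      rw [hR]
      ext κ
      simp only [Finset.mem_filter, Finset.mem_univ, true_and]
      constructor
      · rintro ⟨-, h⟩; exact h
      · intro h; exact ⟨h ▸ hpC, h⟩
    · intro κ hκ
      rw [hR] at hκ
      rcases Finset.mem_filter.mp hκ with ⟨-, h⟩
      exact Finset.mem_filter.mpr ⟨Finset.mem_univ _, h⟩
  have cardG := cardfib G (fun C => Q C) hG
  have cardH := cardfib H (fun C => Q Cᶜ) hH
  -- reindex H's sum by complement
  have reindex : ∑ C ∈ (univ : Finset (Finset (Fin n))).filter (fun C => Q Cᶜ),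
        surjCard n C.card
      = ∑ D ∈ (univ : Finset (Finset (Fin n))).filter (fun D => Q D),
        surjCard n (n - D.card) := by
    apply Finset.sum_nbij' (i := fun C => Cᶜ) (j := fun D => Dᶜ)
    · intro C hC
      rcases Finset.mem_filter.mp hC with ⟨-, h⟩
      exact Finset.mem_filter.mpr ⟨Finset.mem_univ _, h⟩
    · intro D hD
      rcases Finset.mem_filter.mp hD with ⟨-, h⟩
      refine Finset.mem_filter.mpr ⟨Finset.mem_univ _, ?_⟩
      rwa [compl_compl]
    · intro C _; exact compl_compl C
    · intro D _; exact compl_compl D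
    · intro C _
      congr 1
      rw [Finset.card_compl, Fintype.card_fin]
      have : C.card ≤ n := by
        simpa using Finset.card_le_univ C
      omega
  -- group by cardinality
  set q : ℕ → ℕ := fun d =>
    ((univ : Finset (Finset (Fin n))).filter (fun D => Q D ∧ D.card = d)).card with hq
  have group : ∀ (F : ℕ → ℕ),
      ∑ D ∈ (univ : Finset (Finset (Fin n))).filter (fun D => Q D), F D.card
        = ∑ d ∈ Finset.range (n+1), q d * F d := by
    intro F
    have hmaps : ∀ D ∈ (univ : Finset (Finset (Fin n))).filter (fun D => Q D),
        D.card ∈ Finset.range (n+1) := by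
      intro D _
      rw [Finset.mem_range]
      have : D.card ≤ n := by simpa using Finset.card_le_univ D
      omega
    rw [← Finset.sum_fiberwise_of_maps_to hmaps (fun D => F D.card)]
    apply Finset.sum_congr rfl
    intro d _
    have : ∀ D ∈ ((univ : Finset (Finset (Fin n))).filter (fun D => Q D)).filter
        (fun D => D.card = d), F D.card = F d := by
      intro D hD
      rcases Finset.mem_filter.mp hD with ⟨-, h⟩
      rw [h]
    rw [Finset.sum_congr rfl this, Finset.sum_const, smul_eq_mul]
    congr 1
    rw [hq, Finset.filter_filter]
  -- the central inequality
  have central : ∑ d ∈ Finset.range (n+1), q d * surjCard n (n-d)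
      ≤ ∑ d ∈ Finset.range (n+1), q d * surjCard n d := by
    have pointwise : ∀ j, 2*j ≤ n →
        (q j : ℤ) * surjCard n (n-j) + (q (n-j) : ℤ) * surjCard n (n-(n-j))
        ≤ (q j : ℤ) * surjCard n j + (q (n-j) : ℤ) * surjCard n (n-j) := by
      intro j hj
      have hnnj : n - (n-j) = j := by omega
      rw [hnnj]
      have hq' : (q j : ℤ) ≤ (q (n-j) : ℤ) := by
        exact_mod_cast upclosed_card_le hup hj
      have hs' : (surjCard n j : ℤ) ≤ (surjCard n (n-j) : ℤ) := by
        exact_mod_cast surjCard_le n j hj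
      have := mul_add_mul_le_mul_add_mul hq' hs'
      linarith
    have pointwise' : ∀ j ∈ Finset.range (n+1),
        (q j : ℤ) * surjCard n (n-j) + (q (n-j) : ℤ) * surjCard n (n-(n-j))
        ≤ (q j : ℤ) * surjCard n j + (q (n-j) : ℤ) * surjCard n (n-j) := by
      intro j hj
      rcases le_or_gt (2*j) n with h | h
      · exact pointwise j h
      · have hjn : j ≤ n := by rw [Finset.mem_range] at hj; omega
        have h2 : 2*(n-j) ≤ n := by omega
        have := pointwise (n-j) h2
        rw [show n-(n-j) = j by omega] at this ⊢
        linarith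
    rw [← @Nat.cast_le ℤ]
    push_cast
    have refl1 : ∑ j ∈ Finset.range (n+1), (q (n-j) : ℤ) * surjCard n (n-(n-j))
        = ∑ j ∈ Finset.range (n+1), (q j : ℤ) * surjCard n (n-j) := by
      rw [← Finset.sum_range_reflect (fun j => (q j : ℤ) * surjCard n (n-j)) (n+1)]
      apply Finset.sum_congr rfl
      intro j hj
      congr 2 <;> omega
    have refl2 : ∑ j ∈ Finset.range (n+1), (q (n-j) : ℤ) * surjCard n (n-j)
        = ∑ j ∈ Finset.range (n+1), (q j : ℤ) * surjCard n j := by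
      rw [← Finset.sum_range_reflect (fun j => (q j : ℤ) * surjCard n j) (n+1)]
      apply Finset.sum_congr rfl
      intro j hj
      congr 2 <;> omega
    have hsum := Finset.sum_le_sum pointwise'
    rw [Finset.sum_add_distrib, Finset.sum_add_distrib, refl1, refl2] at hsum
    linarith
  -- put it together
  have hHG : H.card ≤ G.card := by
    rw [cardG, cardH, reindex, group (fun d => surjCard n (n-d)),
      group (fun d => surjCard n d)]
    exact central
  have hcover : (univ : Finset (Fin n → Fin n)) ⊆ G ∪ H := by
    intro κ _
    rcases hpair (image κ univ) with h | h
    · exact Finset.mem_union_left _ (Finset.mem_filter.mpr ⟨Finset.mem_univ _, h⟩)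
    · exact Finset.mem_union_right _ (Finset.mem_filter.mpr ⟨Finset.mem_univ _, h⟩)
  have : n^n ≤ G.card + H.card := by
    calc n^n = (univ : Finset (Fin n → Fin n)).card := by
          rw [Finset.card_univ, Fintype.card_fun, Fintype.card_fin]
      _ ≤ (G ∪ H).card := Finset.card_le_card hcover
      _ ≤ G.card + H.card := Finset.card_union_le G H
  omega

end MainCount

section MeasPart

variable {E : Type*} [NormedAddCommGroup E]
    [MeasurableSpace E] [BorelSpace E] [SecondCountableTopology E]
variable {n : ℕ}

/-- the tail event for the sum over a finset of coordinates -/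
def tailSet (B : Finset (Fin n)) (s : ℝ) : Set (Fin n → E) :=
  {x | s ≤ ‖∑ k ∈ B, x k‖}

lemma measurable_tailsum (B : Finset (Fin n)) :
    Measurable (fun x : Fin n → E => ∑ k ∈ B, x k) :=
  Finset.measurable_sum B (fun k _ => measurable_pi_apply k)

lemma measurableSet_tailSet (B : Finset (Fin n)) (s : ℝ) :
    MeasurableSet (tailSet (E := E) B s) :=
  measurableSet_le measurable_const ((measurable_tailsum B).norm)

/-- joint law of an independent family is the product of the laws -/
lemma map_joint_eq_pi {Ω : Type*} [MeasurableSpace Ω] (μ : Measure Ω)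
    [IsProbabilityMeasure μ] (X : Fin n → Ω → E) (hX : ∀ k, Measurable (X k))
    (hind : iIndepFun X μ) :
    Measure.map (fun ω k => X k ω) μ = Measure.pi (fun k => Measure.map (X k) μ) := by
  haveI : ∀ k, IsProbabilityMeasure (Measure.map (X k) μ) :=
    fun k => Measure.isProbabilityMeasure_map (hX k).aemeasurable
  refine (Measure.pi_eq fun s hs => ?_).symm
  rw [Measure.map_apply (measurable_pi_lambda _ (fun k => hX k)) (MeasurableSet.univ_pi hs)]
  have hpre : (fun ω k => X k ω) ⁻¹' (Set.univ.pi s)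
      = ⋂ k ∈ (univ : Finset (Fin n)), X k ⁻¹' s k := by
    ext ω; simp [Set.mem_pi]
  rw [hpre, hind.measure_inter_preimage_eq_mul univ (fun i _ => hs i)]
  exact Finset.prod_congr rfl fun i _ =>
    (Measure.map_apply (hX i) (hs i)).symm

/-- expansion of the product of the uniform mixture as an average over multi-indices -/
lemma pi_mix_eq (ν : Fin n → Measure E) [∀ k, IsProbabilityMeasure (ν k)] (hn : 0 < n) :
    Measure.pi (fun _ : Fin n => ((n : ℝ≥0∞)⁻¹ • ∑ k, ν k))
      = (((n : ℝ≥0∞) ^ n)⁻¹) • ∑ κ : Fin n → Fin n, Measure.pi (fun i => ν (κ i)) := by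
  classical
  haveI hρ : IsProbabilityMeasure ((n : ℝ≥0∞)⁻¹ • ∑ k, ν k) := by
    constructor
    rw [Measure.smul_apply, Measure.finset_sum_apply]
    simp only [measure_univ, Finset.sum_const, Finset.card_univ, Fintype.card_fin,
      nsmul_eq_mul, mul_one, smul_eq_mul]
    exact ENNReal.inv_mul_cancel (by exact_mod_cast hn.ne') (by simp)
  refine Measure.pi_eq fun s hs => ?_
  rw [Measure.smul_apply, Measure.finset_sum_apply]
  have h1 : ∀ κ : Fin n → Fin n,
      Measure.pi (fun i => ν (κ i)) (Set.univ.pi s) = ∏ i, ν (κ i) (s i) :=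
    fun κ => Measure.pi_pi _ _
  rw [Finset.sum_congr rfl (fun κ _ => h1 κ)]
  have h2 : ∑ κ : Fin n → Fin n, ∏ i, ν (κ i) (s i)
      = ∏ i, ∑ k, ν k (s i) := by
    rw [Finset.prod_univ_sum (fun _ => (univ : Finset (Fin n))) (fun i k => ν k (s i))]
    rw [Fintype.piFinset_univ]
  rw [h2]
  have h3 : ∀ i, ((n : ℝ≥0∞)⁻¹ • ∑ k, ν k) (s i) = (n : ℝ≥0∞)⁻¹ * ∑ k, ν k (s i) := by
    intro i
    rw [Measure.smul_apply, Measure.finset_sum_apply, smul_eq_mul]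
  rw [Finset.prod_congr rfl (fun i _ => h3 i), Finset.prod_mul_distrib,
    Finset.prod_const, Finset.card_univ, Fintype.card_fin, smul_eq_mul,
    ENNReal.inv_pow]

end MeasPart

section MeasPart2

variable {E : Type*} [NormedAddCommGroup E] [NormedSpace ℝ E]
    [MeasurableSpace E] [BorelSpace E] [SecondCountableTopology E]
variable {n : ℕ}

/-- masking coordinates outside `B` by `0` -/
lemma map_mask (d : Fin n → Measure E) [∀ i, IsProbabilityMeasure (d i)]
    (B : Finset (Fin n)) :
    Measure.map (fun (x : Fin n → E) k => if k ∈ B then x k else 0) (Measure.pi d)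
      = Measure.pi (fun k => if k ∈ B then d k else Measure.dirac 0) := by
  classical
  have h : ∀ k, MeasurePreserving (fun y : E => if k ∈ B then y else 0) (d k)
      (if k ∈ B then d k else Measure.dirac 0) := by
    intro k
    by_cases hk : k ∈ B
    · simp only [if_pos hk]
      exact MeasurePreserving.id _
    · simp only [if_neg hk]
      refine ⟨measurable_const, ?_⟩
      rw [Measure.map_const, measure_univ, one_smul]
  haveI : ∀ k, IsProbabilityMeasure (if k ∈ B then d k else Measure.dirac 0) := by
    intro k
    by_cases hk : k ∈ B <;> simp [hk] <;> infer_instance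
  exact (measurePreserving_pi d _ h).map_eq

/-- permuting coordinates -/
lemma map_perm (c : Fin n → Measure E) [∀ i, IsProbabilityMeasure (c i)]
    (π : Equiv.Perm (Fin n)) :
    Measure.map (fun (x : Fin n → E) => x ∘ π) (Measure.pi c)
      = Measure.pi (fun i => c (π i)) := by
  have h := measurePreserving_piCongrLeft (α := fun _ : Fin n => E)
    (fun i => c (π i)) π.symm
  -- h : MeasurePreserving (piCongrLeft _ π.symm) (pi fun i' => c (π (π.symm i'))) (pi fun i => c (π i))
  have hfam : (fun i' => c (π (π.symm i'))) = c := by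
    funext i'; rw [Equiv.apply_symm_apply]
  rw [hfam] at h
  have happ : (MeasurableEquiv.piCongrLeft (fun _ : Fin n => E) π.symm)
      = fun (x : Fin n → E) => x ∘ π := by
    funext x
    funext i
    show (Equiv.piCongrLeft (fun _ : Fin n => E) π.symm) x i = x (π i)
    have := Equiv.piCongrLeft_apply_apply (P := fun _ : Fin n => E) π.symm x (π i)
    simpa using this
  rw [← happ]
  exact h.map_eq

/-- law of a selected subsum: pushing `pi c` forward along the select-and-mask map -/
lemma map_select (c : Fin n → Measure E) [∀ i, IsProbabilityMeasure (c i)]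
    (B : Finset (Fin n)) (σ : Fin n → Fin n) (π : Equiv.Perm (Fin n))
    (hπσ : ∀ k ∈ B, π k = σ k) :
    Measure.map (fun (x : Fin n → E) k => if k ∈ B then x (σ k) else 0) (Measure.pi c)
      = Measure.pi (fun k => if k ∈ B then c (σ k) else Measure.dirac 0) := by
  classical
  have hcomp : (fun (x : Fin n → E) k => if k ∈ B then x (σ k) else 0)
      = (fun (y : Fin n → E) k => if k ∈ B then y k else 0) ∘ (fun x => x ∘ π) := by
    funext x k
    by_cases hk : k ∈ B
    · simp [hk, hπσ k hk]
    · simp [hk]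
  rw [hcomp, ← Measure.map_map, map_perm c π, map_mask]
  · congr 1
    funext k
    by_cases hk : k ∈ B
    · simp [hk, hπσ k hk]
    · simp [hk]
  · exact measurable_pi_lambda _ (fun k => by
      by_cases hk : k ∈ B
      · simpa [hk] using measurable_pi_apply k
      · simpa [hk] using measurable_const)
  · exact measurable_pi_lambda _ (fun i => measurable_pi_apply (π i))

/-- flipping signs outside `I` preserves a product of symmetric measures -/
lemma map_flip (c : Fin n → Measure E) [∀ i, IsProbabilityMeasure (c i)]
    (hsym : ∀ i, Measure.map (fun a : E => -a) (c i) = c i) (I : Finset (Fin n)) :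
    Measure.map (fun (x : Fin n → E) i => if i ∈ I then x i else -x i) (Measure.pi c)
      = Measure.pi c := by
  classical
  have h : ∀ i, MeasurePreserving (fun y : E => if i ∈ I then y else -y) (c i) (c i) := by
    intro i
    by_cases hi : i ∈ I
    · simp only [if_pos hi]; exact MeasurePreserving.id _
    · simp only [if_neg hi]
      exact ⟨measurable_neg, hsym i⟩
  exact (measurePreserving_pi c c h).map_eq

/-- Lévy-style selection inequality for products of symmetric measures -/
lemma levy_select (c : Fin n → Measure E) [∀ i, IsProbabilityMeasure (c i)]
    (hsym : ∀ i, Measure.map (fun a : E => -a) (c i) = c i) (I : Finset (Fin n)) (s : ℝ) :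
    Measure.pi c (tailSet I s) ≤ 2 * Measure.pi c (tailSet univ s) := by
  classical
  set F : (Fin n → E) → (Fin n → E) := fun x i => if i ∈ I then x i else -x i with hF
  have hFmeas : Measurable F := measurable_pi_lambda _ (fun i => by
    by_cases hi : i ∈ I
    · simpa [hF, hi] using measurable_pi_apply i
    · simp only [hF, if_neg hi]
      exact (measurable_pi_apply i).neg)
  have hsub : tailSet I s ⊆ tailSet (univ : Finset (Fin n)) s ∪ F ⁻¹' (tailSet univ s) := by
    intro x hx
    have hx' : s ≤ ‖∑ k ∈ I, x k‖ := hx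
    have hsplit : ∑ k ∈ I, x k + ∑ k ∈ Iᶜ, x k = ∑ k, x k :=
      Finset.sum_add_sum_compl I x
    have hFsum : ∑ k, F x k = ∑ k ∈ I, x k - ∑ k ∈ Iᶜ, x k := by
      rw [← Finset.sum_add_sum_compl I (F x)]
      have h1 : ∑ k ∈ I, F x k = ∑ k ∈ I, x k :=
        Finset.sum_congr rfl (fun k hk => by simp [hF, hk])
      have h2 : ∑ k ∈ Iᶜ, F x k = -∑ k ∈ Iᶜ, x k := by
        rw [← Finset.sum_neg_distrib]
        exact Finset.sum_congr rfl (fun k hk => by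
          have : k ∉ I := by simpa using hk
          simp [hF, this])
      rw [h1, h2]
      abel
    rcases le_or_gt s ‖∑ k, x k‖ with hcase | hcase
    · exact Or.inl hcase
    · refine Or.inr ?_
      show s ≤ ‖∑ k, F x k‖
      rw [hFsum]
      have e1 : (∑ k, x k) + (∑ k ∈ I, x k - ∑ k ∈ Iᶜ, x k)
          = (2:ℝ) • (∑ k ∈ I, x k) := by
        rw [← hsplit, two_smul]
        abel
      have e2 : (2:ℝ) * ‖∑ k ∈ I, x k‖
          ≤ ‖∑ k, x k‖ + ‖∑ k ∈ I, x k - ∑ k ∈ Iᶜ, x k‖ := by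
        calc (2:ℝ) * ‖∑ k ∈ I, x k‖ = ‖(2:ℝ) • (∑ k ∈ I, x k)‖ := by
              rw [norm_smul]; simp
          _ = ‖(∑ k, x k) + (∑ k ∈ I, x k - ∑ k ∈ Iᶜ, x k)‖ := by rw [e1]
          _ ≤ _ := norm_add_le _ _
      linarith
  calc Measure.pi c (tailSet I s)
      ≤ Measure.pi c (tailSet univ s ∪ F ⁻¹' (tailSet univ s)) := measure_mono hsub
    _ ≤ Measure.pi c (tailSet univ s) + Measure.pi c (F ⁻¹' (tailSet univ s)) :=
        measure_union_le _ _
    _ = 2 * Measure.pi c (tailSet univ s) := by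
        rw [← Measure.map_apply hFmeas (measurableSet_tailSet univ s), map_flip c hsym I,
          two_mul]

end MeasPart2

/-- If independent *symmetric* Banach-valued `X_1, …, X_n` regularly cover `X̃_1`, and
`X̃_1, …, X̃_n` are i.i.d. copies of `X̃_1`, then for all `λ ≥ 0`,
`P(‖X_1 + ⋯ + X_n‖ ≥ λ) ≤ 8 · P(‖X̃_1 + ⋯ + X̃_n‖ ≥ λ/2)`. -/
theorem stmt_7 {Ω : Type*} [MeasurableSpace Ω] {μ : Measure Ω} [IsProbabilityMeasure μ]
    {E : Type*} [NormedAddCommGroup E] [NormedSpace ℝ E] [CompleteSpace E]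
    [MeasurableSpace E] [BorelSpace E] [SecondCountableTopology E]
    (n : ℕ) (hn : 0 < n) (X Xt : Fin n → Ω → E)
    (hX : ∀ k, Measurable (X k)) (hXt : ∀ k, Measurable (Xt k))
    (hsymm : ∀ k, IdentDistrib (X k) (fun ω => -(X k ω)) μ μ)
    (hXind : iIndepFun X μ)
    (hXtind : iIndepFun Xt μ)
    (hXtid : ∀ k, IdentDistrib (Xt k) (Xt ⟨0, hn⟩) μ μ)
    (hcover : RegularlyCovers μ X (Xt ⟨0, hn⟩)) :
    ∀ lam : ℝ, 0 ≤ lam →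
      μ {ω | lam ≤ ‖∑ k, X k ω‖} ≤ 8 * μ {ω | lam / 2 ≤ ‖∑ k, Xt k ω‖} := by
  classical
  intro lam _hlam
  set ν : Fin n → Measure E := fun k => Measure.map (X k) μ with hν
  haveI : ∀ k, IsProbabilityMeasure (ν k) :=
    fun k => Measure.isProbabilityMeasure_map (hX k).aemeasurable
  -- symmetry of the laws
  have hsym' : ∀ k, Measure.map (fun a : E => -a) (ν k) = ν k := by
    intro k
    have h1 : Measure.map (fun ω => -(X k ω)) μ
        = Measure.map (fun a : E => -a) (Measure.map (X k) μ) :=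
      (Measure.map_map measurable_neg (hX k)).symm
    rw [hν]
    rw [← h1]
    exact ((hsymm k).map_eq).symm
  -- joint laws
  have hjX : Measure.map (fun ω k => X k ω) μ = Measure.pi ν :=
    map_joint_eq_pi μ X hX hXind
  have hjXt : Measure.map (fun ω k => Xt k ω) μ
      = Measure.pi (fun _ => (n : ℝ≥0∞)⁻¹ • ∑ k, ν k) := by
    rw [map_joint_eq_pi μ Xt hXt hXtind]
    congr 1
    funext k
    rw [(hXtid k).map_eq]
    exact hcover
  -- abbreviations
  set L : ℝ≥0∞ := μ {ω | lam ≤ ‖∑ k, X k ω‖} with hLdef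
  set f : Finset (Fin n) → ℝ≥0∞ :=
    fun B => Measure.pi ν (tailSet B (lam/2)) with hfdef
  set t : (Fin n → Fin n) → ℝ≥0∞ :=
    fun κ => Measure.pi (fun i => ν (κ i)) (tailSet univ (lam/2)) with htdef
  have hjmeasX : Measurable (fun ω k => X k ω) :=
    measurable_pi_lambda _ (fun k => hX k)
  have hjmeasXt : Measurable (fun ω k => Xt k ω) :=
    measurable_pi_lambda _ (fun k => hXt k)
  -- L as a product-measure quantity
  have hL : L = Measure.pi ν (tailSet univ lam) := by
    rw [hLdef, ← hjX, Measure.map_apply hjmeasX (measurableSet_tailSet univ lam)]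
    rfl
  -- R as an average over multi-indices
  have hR : μ {ω | lam/2 ≤ ‖∑ k, Xt k ω‖}
      = (((n : ℝ≥0∞) ^ n)⁻¹) * ∑ κ : Fin n → Fin n, t κ := by
    have : μ {ω | lam/2 ≤ ‖∑ k, Xt k ω‖}
        = Measure.pi (fun _ => (n : ℝ≥0∞)⁻¹ • ∑ k, ν k)
            (tailSet (univ : Finset (Fin n)) (lam/2)) := by
      rw [← hjXt, Measure.map_apply hjmeasXt (measurableSet_tailSet univ (lam/2))]
      rfl
    rw [this, pi_mix_eq ν hn, Measure.smul_apply, Measure.finset_sum_apply, smul_eq_mul]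
  -- the splitting inequality
  have hsplit : ∀ B : Finset (Fin n), L ≤ f B + f Bᶜ := by
    intro B
    rw [hL, hfdef]
    have hsub : tailSet (E := E) univ lam
        ⊆ tailSet B (lam/2) ∪ tailSet Bᶜ (lam/2) := by
      intro x hx
      have hx' : lam ≤ ‖∑ k, x k‖ := hx
      by_contra hcon
      rw [Set.mem_union] at hcon
      push_neg at hcon
      obtain ⟨h1, h2⟩ := hcon
      have h1' : ‖∑ k ∈ B, x k‖ < lam/2 := lt_of_not_ge h1
      have h2' : ‖∑ k ∈ Bᶜ, x k‖ < lam/2 := lt_of_not_ge h2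
      have : ∑ k ∈ B, x k + ∑ k ∈ Bᶜ, x k = ∑ k, x k :=
        Finset.sum_add_sum_compl B x
      have hnorm : ‖∑ k, x k‖ ≤ ‖∑ k ∈ B, x k‖ + ‖∑ k ∈ Bᶜ, x k‖ := by
        rw [← this]; exact norm_add_le _ _
      linarith
    calc Measure.pi ν (tailSet univ lam)
        ≤ Measure.pi ν (tailSet B (lam/2) ∪ tailSet Bᶜ (lam/2)) := measure_mono hsub
      _ ≤ _ := measure_union_le _ _
  -- the selection inequality
  have hselect : ∀ (κ : Fin n → Fin n) (B : Finset (Fin n)),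
      B ⊆ image κ univ → f B ≤ 2 * t κ := by
    intro κ B hB
    -- a section of κ on B
    have hsec : ∀ k ∈ B, ∃ i, κ i = k := by
      intro k hk
      rcases Finset.mem_image.mp (hB hk) with ⟨i, -, hi⟩
      exact ⟨i, hi⟩
    set σ : Fin n → Fin n := fun k => if h : k ∈ B then (hsec k h).choose else k with hσdef
    have hσ : ∀ k ∈ B, κ (σ k) = k := by
      intro k hk
      rw [hσdef]
      simp only [dif_pos hk]
      exact (hsec k hk).choose_spec
    have hσinj : Set.InjOn σ (B : Set (Fin n)) := by
      intro a ha b hb hab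
      have ha' : a ∈ B := ha
      have hb' : b ∈ B := hb
      rw [← hσ a ha', ← hσ b hb', hab]
    -- a permutation extending σ on B
    have hbij : Function.Bijective (fun x : {x // x ∈ B} => (⟨σ x.1,
        Finset.mem_image.mpr ⟨x.1, x.2, rfl⟩⟩ : {y // y ∈ B.image σ})) := by
      constructor
      · rintro ⟨a, ha⟩ ⟨b, hb⟩ h
        have : σ a = σ b := congrArg Subtype.val h
        exact Subtype.ext (hσinj ha hb this)
      · rintro ⟨y, hy⟩
        rcases Finset.mem_image.mp hy with ⟨a, ha, rfl⟩
        exact ⟨⟨a, ha⟩, rfl⟩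
    set e : {x // x ∈ B} ≃ {y // y ∈ B.image σ} := Equiv.ofBijective _ hbij with hedef
    set π : Equiv.Perm (Fin n) := e.extendSubtype with hπdef
    have hπ : ∀ k ∈ B, π k = σ k := by
      intro k hk
      rw [hπdef]
      exact e.extendSubtype_apply_of_mem k hk
    -- the mask map
    set mask : (Fin n → E) → (Fin n → E) := fun x k => if k ∈ B then x k else 0
      with hmaskdef
    have hmaskmeas : Measurable mask :=
      measurable_pi_lambda _ (fun k => by
        by_cases hk : k ∈ B
        · simpa [hmaskdef, hk] using measurable_pi_apply k
        · simpa [hmaskdef, hk] using measurable_const)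
    have hmaskpre : mask ⁻¹' (tailSet univ (lam/2)) = tailSet B (lam/2) := by
      ext x
      show lam/2 ≤ ‖∑ k, mask x k‖ ↔ lam/2 ≤ ‖∑ k ∈ B, x k‖
      have : ∑ k, mask x k = ∑ k ∈ B, x k := by
        rw [hmaskdef]
        simp only
        rw [Finset.sum_ite_mem, Finset.univ_inter]
      rw [this]
    -- the select map
    set sel : (Fin n → E) → (Fin n → E) := fun x k => if k ∈ B then x (σ k) else 0
      with hseldef
    have hselmeas : Measurable sel :=
      measurable_pi_lambda _ (fun k => by
        by_cases hk : k ∈ B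
        · simpa [hseldef, hk] using measurable_pi_apply (σ k)
        · simpa [hseldef, hk] using measurable_const)
    have hselpre : sel ⁻¹' (tailSet univ (lam/2)) = tailSet (B.image σ) (lam/2) := by
      ext x
      show lam/2 ≤ ‖∑ k, sel x k‖ ↔ lam/2 ≤ ‖∑ i ∈ B.image σ, x i‖
      have h1 : ∑ k, sel x k = ∑ k ∈ B, x (σ k) := by
        rw [hseldef]
        simp only
        rw [Finset.sum_ite_mem, Finset.univ_inter]
      have h2 : ∑ i ∈ B.image σ, x i = ∑ k ∈ B, x (σ k) :=
        Finset.sum_image (fun a ha b hb h => hσinj ha hb h)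
      rw [h1, h2]
    -- identify f B with a subsum tail of the κ-product
    have step1 : f B = Measure.pi (fun k => if k ∈ B then ν k else Measure.dirac 0)
        (tailSet univ (lam/2)) := by
      rw [hfdef]
      simp only
      rw [← hmaskpre, ← Measure.map_apply hmaskmeas (measurableSet_tailSet univ (lam/2)),
        map_mask ν B]
    have step2 : Measure.pi (fun k => if k ∈ B then ν k else Measure.dirac 0)
        = Measure.map sel (Measure.pi (fun i => ν (κ i))) := by
      rw [hseldef, map_select (fun i => ν (κ i)) B σ π hπ]
      congr 1
      funext k
      by_cases hk : k ∈ B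
      · simp [hk, hσ k hk]
      · simp [hk]
    have step3 : f B = Measure.pi (fun i => ν (κ i)) (tailSet (B.image σ) (lam/2)) := by
      rw [step1, step2, Measure.map_apply hselmeas (measurableSet_tailSet univ (lam/2)),
        hselpre]
    rw [step3, htdef]
    exact levy_select (fun i => ν (κ i)) (fun i => hsym' (κ i)) (B.image σ) (lam/2)
  -- the up-closed pair-covering predicate
  set Q : Finset (Fin n) → Prop := fun C => ∃ B : Finset (Fin n), B ⊆ C ∧ L ≤ 2 * f B
    with hQdef
  haveI : DecidablePred Q := Classical.decPred _
  have hup : ∀ {B C : Finset (Fin n)}, B ⊆ C → Q B → Q C := by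
    rintro B C hBC ⟨B', hB', hLB'⟩
    exact ⟨B', hB'.trans hBC, hLB'⟩
  have hpair : ∀ C : Finset (Fin n), Q C ∨ Q Cᶜ := by
    intro C
    rcases le_total (f C) (f Cᶜ) with h | h
    · right
      refine ⟨Cᶜ, subset_rfl, ?_⟩
      calc L ≤ f C + f Cᶜ := hsplit C
        _ ≤ f Cᶜ + f Cᶜ := add_le_add_left h _
        _ = 2 * f Cᶜ := (two_mul _).symm
    · left
      refine ⟨C, subset_rfl, ?_⟩
      calc L ≤ f C + f Cᶜ := hsplit C
        _ ≤ f C + f C := add_le_add_right h _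
        _ = 2 * f C := (two_mul _).symm
  -- counting
  set G : Finset (Fin n → Fin n) :=
    (univ : Finset (Fin n → Fin n)).filter (fun κ => Q (image κ univ)) with hGdef
  have hcount : n^n ≤ 2 * G.card := count_Q_image hup hpair
  -- for good κ, L ≤ 4 * t κ
  have hgood : ∀ κ ∈ G, L ≤ 4 * t κ := by
    intro κ hκ
    rcases Finset.mem_filter.mp hκ with ⟨-, B, hB, hLB⟩
    calc L ≤ 2 * f B := hLB
      _ ≤ 2 * (2 * t κ) := by
          exact mul_le_mul_right (hselect κ B hB) 2
      _ = 4 * t κ := by ring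
  -- sum up
  have hsumG : (G.card : ℝ≥0∞) * L ≤ 4 * ∑ κ ∈ G, t κ := by
    calc (G.card : ℝ≥0∞) * L = ∑ _κ ∈ G, L := by
          rw [Finset.sum_const, nsmul_eq_mul]
      _ ≤ ∑ κ ∈ G, 4 * t κ := Finset.sum_le_sum hgood
      _ = 4 * ∑ κ ∈ G, t κ := by rw [Finset.mul_sum]
  have hGsub : ∑ κ ∈ G, t κ ≤ ∑ κ : Fin n → Fin n, t κ :=
    Finset.sum_le_sum_of_subset (Finset.subset_univ G)
  -- final chain
  have hnn0 : ((n : ℝ≥0∞) ^ n) ≠ 0 := by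
    apply pow_ne_zero
    exact_mod_cast hn.ne'
  have hnntop : ((n : ℝ≥0∞) ^ n) ≠ ∞ := by
    apply ENNReal.pow_ne_top
    exact ENNReal.natCast_ne_top n
  have hfinal : L ≤ 8 * ((((n : ℝ≥0∞) ^ n)⁻¹) * ∑ κ : Fin n → Fin n, t κ) := by
    have h1 : L = (((n : ℝ≥0∞) ^ n)⁻¹ * ((n : ℝ≥0∞) ^ n)) * L := by
      rw [ENNReal.inv_mul_cancel hnn0 hnntop, one_mul]
    have h2 : ((n : ℝ≥0∞) ^ n) ≤ 2 * (G.card : ℝ≥0∞) := by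
      exact_mod_cast hcount
    calc L = (((n : ℝ≥0∞) ^ n)⁻¹ * ((n : ℝ≥0∞) ^ n)) * L := h1
      _ ≤ (((n : ℝ≥0∞) ^ n)⁻¹ * (2 * G.card)) * L := by
          apply mul_le_mul_left
          exact mul_le_mul_right h2 _
      _ = 2 * (((n : ℝ≥0∞) ^ n)⁻¹ * ((G.card : ℝ≥0∞) * L)) := by ring
      _ ≤ 2 * (((n : ℝ≥0∞) ^ n)⁻¹ * (4 * ∑ κ ∈ G, t κ)) := by
          apply mul_le_mul_right
          exact mul_le_mul_right hsumG _
      _ ≤ 2 * (((n : ℝ≥0∞) ^ n)⁻¹ * (4 * ∑ κ : Fin n → Fin n, t κ)) := by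
          apply mul_le_mul_right
          apply mul_le_mul_right
          exact mul_le_mul_right hGsub _
      _ = 8 * ((((n : ℝ≥0∞) ^ n)⁻¹) * ∑ κ : Fin n → Fin n, t κ) := by ring
  rw [hR]
  exact hfinal
end

section
/- Let S be a Banach-valued random variable, let S' be an independent copy of S, and let M be a median of the real random variable ‖S‖ (i.e., P(‖S‖ ≥ M) ≥ 1/2 and P(‖S‖ ≤ M) ≥ 1/2). Then for all λ ≥ 0, P(‖S‖ − M ≥ λ) ≤ 2 · P(‖S − S'‖ ≥ λ). -/
open MeasureTheory ProbabilityTheory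
open scoped ENNReal NNReal

/-- If `S'` is an independent copy of the Banach-valued random variable `S` and `M` is a
median of `‖S‖` (i.e. `P(‖S‖ ≥ M) ≥ 1/2` and `P(‖S‖ ≤ M) ≥ 1/2`), then for all `λ ≥ 0`,
`P(‖S‖ − M ≥ λ) ≤ 2 · P(‖S − S'‖ ≥ λ)`. -/
theorem stmt_9 {Ω : Type*} [MeasurableSpace Ω] {μ : Measure Ω} [IsProbabilityMeasure μ]
    {E : Type*} [NormedAddCommGroup E] [NormedSpace ℝ E] [CompleteSpace E]
    [MeasurableSpace E] [BorelSpace E] [SecondCountableTopology E]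
    (S S' : Ω → E) (hS : Measurable S) (hS' : Measurable S')
    (hind : IndepFun S S' μ) (hcopy : IdentDistrib S' S μ μ)
    (M : ℝ)
    (hM1 : (1 / 2 : ℝ≥0∞) ≤ μ {ω | M ≤ ‖S ω‖})
    (hM2 : (1 / 2 : ℝ≥0∞) ≤ μ {ω | ‖S ω‖ ≤ M}) :
    ∀ lam : ℝ, 0 ≤ lam →
      μ {ω | lam ≤ ‖S ω‖ - M} ≤ 2 * μ {ω | lam ≤ ‖S ω - S' ω‖} := by
  intro lam _
  set A : Set E := {x | lam ≤ ‖x‖ - M} with hA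
  set B : Set E := {x | ‖x‖ ≤ M} with hB
  have hAm : MeasurableSet A := measurableSet_le measurable_const
    ((measurable_norm).sub measurable_const)
  have hBm : MeasurableSet B := measurableSet_le measurable_norm measurable_const
  -- μ(S'⁻¹ B) ≥ 1/2 by identical distribution
  have hB' : (1 / 2 : ℝ≥0∞) ≤ μ (S' ⁻¹' B) := by
    have h := hcopy.measure_mem_eq hBm
    exact le_of_le_of_eq hM2 h.symm
  have hprod : μ (S ⁻¹' A ∩ S' ⁻¹' B) = μ (S ⁻¹' A) * μ (S' ⁻¹' B) :=
    hind.measure_inter_preimage_eq_mul A B hAm hBm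
  have hsub : S ⁻¹' A ∩ S' ⁻¹' B ⊆ {ω | lam ≤ ‖S ω - S' ω‖} := by
    rintro ω ⟨h1, h2⟩
    have : lam ≤ ‖S ω‖ - ‖S' ω‖ := by
      have h1' : lam ≤ ‖S ω‖ - M := h1
      have h2' : ‖S' ω‖ ≤ M := h2
      linarith
    calc lam ≤ ‖S ω‖ - ‖S' ω‖ := this
      _ ≤ ‖S ω - S' ω‖ := norm_sub_norm_le _ _
  calc μ {ω | lam ≤ ‖S ω‖ - M} = μ (S ⁻¹' A) := rfl
    _ = 2 * ((1/2) * μ (S ⁻¹' A)) := by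
        rw [← mul_assoc]
        norm_num [ENNReal.mul_inv_cancel]
    _ ≤ 2 * (μ (S' ⁻¹' B) * μ (S ⁻¹' A)) :=
        mul_le_mul_right (mul_le_mul_left hB' _) 2
    _ = 2 * μ (S ⁻¹' A ∩ S' ⁻¹' B) := by rw [hprod, mul_comm (μ (S ⁻¹' A))]
    _ ≤ 2 * μ {ω | lam ≤ ‖S ω - S' ω‖} :=
        mul_le_mul_right (measure_mono hsub) 2
end

section
/- For every integer n ≥ 1 and every x ∈ [0,1], if 1 − (1 − x)^n ≤ 1/2, then nx ≤ 2(1 − (1 − x)^n). -/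
/-- For every integer `n ≥ 1` and every `x ∈ [0,1]`, if `1 - (1 - x)^n ≤ 1/2`,
then `n * x ≤ 2 * (1 - (1 - x)^n)`. -/
theorem stmt_12 (n : ℕ) (hn : 1 ≤ n) (x : ℝ) (hx : x ∈ Set.Icc (0 : ℝ) 1)
    (h : 1 - (1 - x) ^ n ≤ 1 / 2) :
    (n : ℝ) * x ≤ 2 * (1 - (1 - x) ^ n) := by
  obtain ⟨hx0, hx1⟩ := hx
  set y : ℝ := 1 - x with hy
  have hy0 : 0 ≤ y := by linarith
  have hy1 : y ≤ 1 := by linarith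
  have hyn : (1:ℝ)/2 ≤ y ^ n := by linarith
  have hsum : 1 - y ^ n = (∑ i ∈ Finset.range n, y ^ i) * (1 - y) := by
    have := geom_sum_mul y n
    nlinarith [this]
  have hterm : ∀ i ∈ Finset.range n, (1:ℝ)/2 ≤ y ^ i := by
    intro i hi
    have : y ^ n ≤ y ^ i := pow_le_pow_of_le_one hy0 hy1 (Finset.mem_range.mp hi).le
    linarith
  have hsum2 : (n:ℝ) * (1/2) ≤ ∑ i ∈ Finset.range n, y ^ i := by
    calc (n:ℝ) * (1/2) = ∑ _i ∈ Finset.range n, (1:ℝ)/2 := by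
          simp [Finset.sum_const, mul_comm]
      _ ≤ _ := Finset.sum_le_sum hterm
  have hx' : 0 ≤ 1 - y := by linarith
  rw [hsum]
  calc (n:ℝ) * x = (n:ℝ) * (1 - y) := by rw [hy]; ring
    _ ≤ 2 * (∑ i ∈ Finset.range n, y ^ i) * (1 - y) := by
        apply mul_le_mul_of_nonneg_right _ hx'
        linarith
    _ = 2 * ((∑ i ∈ Finset.range n, y ^ i) * (1 - y)) := by ring
end
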